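/- arXiv:2210.04060 — 9 statements merged into one kernel-verified Lean document; each statement's English description precedes it below -/
import Mathlib

section
/- Let M₁ be a bounded signed measure on ℝ with M₁(ℝ) = 0 and ∫|F_{M₁}| dλ < ∞, and let M₂ be a bounded signed measure whose distribution function is Lipschitz with constant L. Then the Kolmogorov norm of the convolution satisfies ‖M₁∗M₂‖_K ≤ L · ∫_ℝ |F_{M₁}(x)| dx. -/
open MeasureTheory Set
open scoped ENNReal NNReal

/-- Convolution of two measures on `ℝ`. -/
noncomputable def mconv (μ ν : MeasureTheory.Measure ℝ) : MeasureTheory.Measure ℝ :=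
  (μ.prod ν).map (fun p : ℝ × ℝ => p.1 + p.2)

/-- Distribution function of a measure. -/
noncomputable def cdf' (μ : MeasureTheory.Measure ℝ) (x : ℝ) : ℝ := (μ (Set.Iic x)).toReal

lemma cdf'_mono (μ : Measure ℝ) [IsFiniteMeasure μ] : Monotone (cdf' μ) := fun _ _ hab =>
  ENNReal.toReal_mono (measure_ne_top μ _) (measure_mono (Iic_subset_Iic.mpr hab))

lemma cdf'_meas (μ : Measure ℝ) [IsFiniteMeasure μ] : Measurable (cdf' μ) :=
  (cdf'_mono μ).measurable

lemma cdf'_nonneg (μ : Measure ℝ) (x : ℝ) : 0 ≤ cdf' μ x := ENNReal.toReal_nonneg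

lemma cdf'_le (μ : Measure ℝ) [IsFiniteMeasure μ] (x : ℝ) : cdf' μ x ≤ (μ univ).toReal :=
  ENNReal.toReal_mono (measure_ne_top _ _) (measure_mono (subset_univ _))

lemma integrable_bdd_meas (μ : Measure ℝ) [IsFiniteMeasure μ] {f : ℝ → ℝ} (hf : Measurable f)
    {C : ℝ} (hC : ∀ x, |f x| ≤ C) : Integrable f μ :=
  Integrable.mono' (integrable_const C) hf.aestronglyMeasurable (ae_of_all _ fun x => hC x)

lemma cdf'_mconv (μ ν : Measure ℝ) [IsFiniteMeasure μ] [IsFiniteMeasure ν] (z : ℝ) :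
    cdf' (mconv μ ν) z = ∫ x, cdf' ν (z - x) ∂μ := by
  have hmeas : Measurable fun p : ℝ × ℝ => p.1 + p.2 := measurable_fst.add measurable_snd
  have hpre : ∀ x : ℝ, (Prod.mk x ⁻¹' ((fun p : ℝ × ℝ => p.1 + p.2) ⁻¹' Iic z)) = Iic (z - x) := by
    intro x; ext y; simp only [mem_preimage, mem_Iic]; constructor <;> intro h <;> linarith
  have h1 : (mconv μ ν) (Iic z) = ∫⁻ x, ν (Iic (z - x)) ∂μ := by
    rw [mconv, Measure.map_apply hmeas measurableSet_Iic,
      Measure.prod_apply (hmeas measurableSet_Iic)]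
    simp_rw [hpre]
  have hm : Measurable fun x => ν (Iic (z - x)) := by
    have h := measurable_measure_prodMk_left (ν := ν)
      (hmeas (measurableSet_Iic (a := z)))
    simpa only [hpre] using h
  rw [cdf', h1, ← integral_toReal hm.aemeasurable (ae_of_all _ fun x => measure_lt_top ν _)]
  rfl

lemma cdf'_Ioc (μ : Measure ℝ) [IsFiniteMeasure μ] {a b : ℝ} (hab : a ≤ b) :
    (μ (Ioc a b)).toReal = cdf' μ b - cdf' μ a := by
  have h : μ (Iic a) + μ (Ioc a b) = μ (Iic b) := by
    rw [← measure_union (Iic_disjoint_Ioc le_rfl) measurableSet_Ioc, Iic_union_Ioc_eq_Iic hab]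
  have h2 := congrArg ENNReal.toReal h
  rw [ENNReal.toReal_add (measure_ne_top _ _) (measure_ne_top _ _)] at h2
  simp only [cdf']; linarith

lemma fubini_step (μ : Measure ℝ) [IsFiniteMeasure μ] (φ : ℝ → ℝ) (hφm : Measurable φ)
    (C : ℝ) (hφb : ∀ x, |φ x| ≤ C) {ε : ℝ} (hε : 0 < ε) :
    ((∫ x, (∫ t in Ico x (x+ε), φ t) ∂μ) = ∫ t, φ t * (μ (Ioc (t-ε) t)).toReal) ∧
    Integrable (fun x => ∫ t in Ico x (x+ε), φ t) μ ∧
    Integrable (fun t => φ t * (μ (Ioc (t-ε) t)).toReal) := by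
  set S : Set (ℝ × ℝ) := {p | p.1 ≤ p.2 ∧ p.2 < p.1 + ε} with hS
  have hSm : MeasurableSet S := by
    rw [hS, Set.setOf_and]
    exact (measurableSet_le measurable_fst measurable_snd).inter
      (measurableSet_lt measurable_snd (measurable_fst.add_const ε))
  set f : ℝ × ℝ → ℝ := S.indicator (fun p => φ p.2) with hf
  have hfm : Measurable f := (hφm.comp measurable_snd).indicator hSm
  have hSx : ∀ x : ℝ, Prod.mk x ⁻¹' S = Ico x (x+ε) := by
    intro x; ext t; simp [hS, mem_Ico]
  have hSfin : (μ.prod volume) S < ∞ := by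
    rw [Measure.prod_apply hSm]
    simp_rw [hSx, Real.volume_Ico, add_sub_cancel_left, lintegral_const]
    exact ENNReal.mul_lt_top ENNReal.ofReal_lt_top (measure_lt_top _ _)
  have hCint : Integrable (S.indicator fun _ => C) (μ.prod volume) := by
    rw [integrable_indicator_iff hSm]
    exact integrableOn_const hSfin.ne
  have hfi : Integrable f (μ.prod volume) := by
    refine Integrable.mono' hCint hfm.aestronglyMeasurable (ae_of_all _ fun p => ?_)
    by_cases hp : p ∈ S
    · simp only [hf, Set.indicator_of_mem hp]; exact hφb _
    · simp only [hf, Set.indicator_of_notMem hp, norm_zero]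
      have := abs_nonneg (φ p.2); have := hφb p.2; linarith
  have hinner1 : ∀ x : ℝ, (fun y => f (x, y)) = (Ico x (x+ε)).indicator φ := by
    intro x; ext y
    simp only [hf, Set.indicator_apply]
    exact if_congr (by simp [hS, mem_Ico]) rfl rfl
  have hinner2 : ∀ t : ℝ, (fun x => f (x, t)) = (Ioc (t-ε) t).indicator (fun _ => φ t) := by
    intro t; ext x
    simp only [hf, Set.indicator_apply]
    refine if_congr ?_ rfl rfl
    simp only [hS, mem_setOf_eq, mem_Ioc]
    constructor <;> rintro ⟨h1, h2⟩ <;> constructor <;> linarith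
  have eqswap : ∫ x, ∫ y, f (x, y) ∂volume ∂μ = ∫ y, ∫ x, f (x, y) ∂μ ∂volume :=
    integral_integral_swap (by exact hfi)
  have lhseq : ∀ x : ℝ, (∫ y, f (x, y) ∂volume) = ∫ t in Ico x (x+ε), φ t := by
    intro x; rw [hinner1 x, integral_indicator measurableSet_Ico]
  have rhseq : ∀ t : ℝ, (∫ x, f (x, t) ∂μ) = φ t * (μ (Ioc (t-ε) t)).toReal := by
    intro t
    rw [hinner2 t, integral_indicator measurableSet_Ioc, setIntegral_const, smul_eq_mul, mul_comm, measureReal_def]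
  refine ⟨?_, ?_, ?_⟩
  · calc (∫ x, (∫ t in Ico x (x+ε), φ t) ∂μ) = ∫ x, ∫ y, f (x, y) ∂volume ∂μ := by
          simp_rw [lhseq]
      _ = ∫ y, ∫ x, f (x, y) ∂μ ∂volume := eqswap
      _ = ∫ t, φ t * (μ (Ioc (t-ε) t)).toReal := by simp_rw [rhseq]
  · have := hfi.integral_prod_left
    simpa only [lhseq] using this
  · have := hfi.integral_prod_right
    simpa only [rhseq] using this

lemma approx_step (μ : Measure ℝ) [IsFiniteMeasure μ] (φ : ℝ → ℝ) (hφm : Measurable φ)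
    (C : ℝ) (hφb : ∀ x, |φ x| ≤ C) (L : NNReal) (hφL : LipschitzWith L φ)
    {ε : ℝ} (hε : 0 < ε) (hI : Integrable (fun x => ∫ t in Ico x (x+ε), φ t) μ) :
    |(∫ x, (∫ t in Ico x (x+ε), φ t) ∂μ) - ε * ∫ x, φ x ∂μ|
      ≤ (L : ℝ) * ε^2 * (μ univ).toReal := by
  have hφint : Integrable φ μ := integrable_bdd_meas μ hφm hφb
  have hvol : ∀ x : ℝ, volume (Ico x (x+ε)) < ∞ := fun x => by
    rw [Real.volume_Ico]; exact ENNReal.ofReal_lt_top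
  have hpt : ∀ x : ℝ, |(∫ t in Ico x (x+ε), φ t) - ε * φ x| ≤ (L : ℝ) * ε^2 := by
    intro x
    have hconst : (∫ t in Ico x (x+ε), (fun _ => φ x) t) = ε * φ x := by
      rw [setIntegral_const, measureReal_def, Real.volume_Ico, add_sub_cancel_left,
        ENNReal.toReal_ofReal hε.le, smul_eq_mul]
    have hio : IntegrableOn φ (Ico x (x+ε)) volume := by
      exact Integrable.mono' (integrableOn_const (hvol x).ne)
        hφm.aestronglyMeasurable.restrict (ae_of_all _ fun t => hφb t)
    have hioc : IntegrableOn (fun _ => φ x) (Ico x (x+ε)) volume :=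
      integrableOn_const (hvol x).ne
    rw [← hconst, ← integral_sub hio hioc]
    have hb : ∀ t ∈ Ico x (x+ε), ‖φ t - φ x‖ ≤ (L : ℝ) * ε := by
      intro t ht
      have := hφL.dist_le_mul t x
      rw [Real.dist_eq, Real.dist_eq] at this
      refine le_trans this ?_
      have h1 : |t - x| ≤ ε := by
        rw [abs_le]; rcases ht with ⟨h2, h3⟩; constructor <;> simp at * <;> linarith
      exact mul_le_mul_of_nonneg_left h1 L.coe_nonneg
    have := norm_setIntegral_le_of_norm_le_const_ae' (hvol x)
      (ae_of_all _ hb)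
    rw [Real.norm_eq_abs] at this
    refine le_trans this ?_
    rw [measureReal_def, Real.volume_Ico, add_sub_cancel_left, ENNReal.toReal_ofReal hε.le]
    ring_nf; rfl
  have heq : ε * ∫ x, φ x ∂μ = ∫ x, ε * φ x ∂μ := (integral_const_mul ε φ).symm
  rw [heq, ← integral_sub hI (hφint.const_mul ε)]
  have h1 := norm_integral_le_integral_norm (μ := μ)
    (f := fun x => (∫ t in Ico x (x+ε), φ t) - ε * φ x)
  rw [Real.norm_eq_abs] at h1
  refine le_trans h1 ?_
  have h2 : (∫ x, ‖(∫ t in Ico x (x+ε), φ t) - ε * φ x‖ ∂μ)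
      ≤ ∫ _x, (L : ℝ) * ε^2 ∂μ := by
    refine integral_mono (hI.sub (hφint.const_mul ε)).norm (integrable_const _) fun x => ?_
    rw [Real.norm_eq_abs]; exact hpt x
  refine le_trans h2 ?_
  rw [integral_const, smul_eq_mul, mul_comm, measureReal_def]

lemma key (P Q : Measure ℝ) [IsFiniteMeasure P] [IsFiniteMeasure Q]
    (hF : Integrable (fun x => cdf' P x - cdf' Q x))
    (φ : ℝ → ℝ) (hφm : Measurable φ) (C : ℝ) (hφb : ∀ x, |φ x| ≤ C)
    (L : NNReal) (hφL : LipschitzWith L φ) :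
    |(∫ x, φ x ∂P) - ∫ x, φ x ∂Q| ≤ (L : ℝ) * ∫ x, |cdf' P x - cdf' Q x| := by
  set B := (L : ℝ) * ∫ x, |cdf' P x - cdf' Q x| with hBdef
  set K := (P univ).toReal + (Q univ).toReal with hKdef
  have hKnn : 0 ≤ K := add_nonneg ENNReal.toReal_nonneg ENNReal.toReal_nonneg
  have hnormC : ∀ x : ℝ, ‖φ x‖ ≤ C := fun x => by rw [Real.norm_eq_abs]; exact hφb x
  have main : ∀ ε : ℝ, 0 < ε →
      |(∫ x, φ x ∂P) - ∫ x, φ x ∂Q| ≤ B + (L : ℝ) * K * ε := by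
    intro ε hε
    obtain ⟨hPeq, hPint, hPint2⟩ := fubini_step P φ hφm C hφb hε
    obtain ⟨hQeq, hQint, hQint2⟩ := fubini_step Q φ hφm C hφb hε
    have hFint1 : Integrable (fun t => φ t * (cdf' P t - cdf' Q t)) volume :=
      hF.bdd_mul hφm.aestronglyMeasurable (ae_of_all _ hnormC)
    have hFε : Integrable (fun t => cdf' P (t - ε) - cdf' Q (t - ε)) volume :=
      hF.comp_sub_right ε
    have hFint2 : Integrable (fun t => φ t * (cdf' P (t - ε) - cdf' Q (t - ε))) volume :=
      hFε.bdd_mul hφm.aestronglyMeasurable (ae_of_all _ hnormC)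
    have hFint3 : Integrable (fun t => φ (t + ε) * (cdf' P t - cdf' Q t)) volume :=
      hF.bdd_mul (hφm.comp (measurable_add_const ε)).aestronglyMeasurable
        (ae_of_all _ fun x => by rw [Real.norm_eq_abs]; exact hφb _)
    have hDeq : (∫ x, (∫ t in Ico x (x+ε), φ t) ∂P) - (∫ x, (∫ t in Ico x (x+ε), φ t) ∂Q)
        = ∫ t, (φ t * (cdf' P t - cdf' Q t) - φ t * (cdf' P (t - ε) - cdf' Q (t - ε))) := by
      rw [hPeq, hQeq, ← integral_sub hPint2 hQint2]
      congr 1; ext t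
      rw [cdf'_Ioc P (by linarith : t - ε ≤ t), cdf'_Ioc Q (by linarith : t - ε ≤ t)]
      ring
    have hshift : (∫ t, φ t * (cdf' P (t - ε) - cdf' Q (t - ε)))
        = ∫ t, φ (t + ε) * (cdf' P t - cdf' Q t) := by
      calc (∫ t, φ t * (cdf' P (t - ε) - cdf' Q (t - ε)))
          = ∫ t, (fun u => φ (u + ε) * (cdf' P u - cdf' Q u)) (t - ε) := by
            congr 1; ext t; simp [sub_add_cancel]
        _ = ∫ u, φ (u + ε) * (cdf' P u - cdf' Q u) :=
            integral_sub_right_eq_self (μ := volume)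
              (fun u => φ (u + ε) * (cdf' P u - cdf' Q u)) ε
    have hDeq2 : (∫ x, (∫ t in Ico x (x+ε), φ t) ∂P) - (∫ x, (∫ t in Ico x (x+ε), φ t) ∂Q)
        = ∫ t, (φ t - φ (t + ε)) * (cdf' P t - cdf' Q t) := by
      rw [hDeq, integral_sub hFint1 hFint2, hshift, ← integral_sub hFint1 hFint3]
      congr 1; ext t; ring
    have hDbound : |(∫ x, (∫ t in Ico x (x+ε), φ t) ∂P)
        - (∫ x, (∫ t in Ico x (x+ε), φ t) ∂Q)| ≤ ε * B := by
      rw [hDeq2]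
      have h1 := norm_integral_le_integral_norm (μ := volume)
        (f := fun t => (φ t - φ (t + ε)) * (cdf' P t - cdf' Q t))
      rw [Real.norm_eq_abs] at h1
      refine le_trans h1 ?_
      have h2 : (∫ t, ‖(φ t - φ (t + ε)) * (cdf' P t - cdf' Q t)‖)
          ≤ ∫ t, ((L : ℝ) * ε) * |cdf' P t - cdf' Q t| := by
        have hsub : Integrable (fun t => (φ t - φ (t + ε)) * (cdf' P t - cdf' Q t)) volume := by
          have h0 := hFint1.sub hFint3
          simpa [sub_mul, Pi.sub_def] using h0
        refine integral_mono hsub.norm ((hF.abs).const_mul _) fun t => ?_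
        rw [Real.norm_eq_abs, abs_mul]
        refine mul_le_mul_of_nonneg_right ?_ (abs_nonneg _)
        have := hφL.dist_le_mul t (t + ε)
        rw [Real.dist_eq, Real.dist_eq] at this
        refine le_trans this ?_
        have : |t - (t + ε)| = ε := by rw [abs_of_nonpos (by linarith)]; ring
        rw [this]
      refine le_trans h2 ?_
      rw [integral_const_mul, hBdef]
      ring_nf
      exact le_refl _
    have hAP := approx_step P φ hφm C hφb L hφL hε hPint
    have hAQ := approx_step Q φ hφm C hφb L hφL hε hQint
    set u := ∫ x, (∫ t in Ico x (x+ε), φ t) ∂P with hu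
    set v := ∫ x, (∫ t in Ico x (x+ε), φ t) ∂Q with hv
    set p := ∫ x, φ x ∂P with hp
    set q := ∫ x, φ x ∂Q with hq
    have tri : |ε * p - ε * q| ≤ |u - ε * p| + |u - v| + |v - ε * q| := by
      have h3 : ε * p - ε * q = -(u - ε * p) + (u - v) + (v - ε * q) := by ring
      calc |ε * p - ε * q| = |(-(u - ε * p) + (u - v)) + (v - ε * q)| := by rw [h3]
        _ ≤ |(-(u - ε * p) + (u - v))| + |v - ε * q| := abs_add_le _ _
        _ ≤ (|(-(u - ε * p))| + |u - v|) + |v - ε * q| := by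
            exact add_le_add_left (abs_add_le _ _) _
        _ = |u - ε * p| + |u - v| + |v - ε * q| := by rw [abs_neg]
    have hεa : ε * |p - q| ≤ ε * (B + (L : ℝ) * K * ε) := by
      have h4 : ε * |p - q| = |ε * p - ε * q| := by
        rw [← mul_sub, abs_mul, abs_of_pos hε]
      rw [h4]
      refine le_trans tri ?_
      have : (L : ℝ) * ε^2 * (P univ).toReal + ε * B + (L : ℝ) * ε^2 * (Q univ).toReal
          = ε * (B + (L : ℝ) * K * ε) := by rw [hKdef]; ring
      linarith [hAP, hAQ, hDbound]
    exact le_of_mul_le_mul_left hεa hε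
  refine le_of_forall_pos_le_add fun δ hδ => ?_
  have hLK : 0 ≤ (L : ℝ) * K := mul_nonneg L.coe_nonneg hKnn
  have hεpos : 0 < δ / ((L : ℝ) * K + 1) := div_pos hδ (by linarith)
  refine le_trans (main _ hεpos) ?_
  have h5 : (L : ℝ) * K * (δ / ((L : ℝ) * K + 1)) ≤ δ := by
    have h6 : (L : ℝ) * K * (δ / ((L : ℝ) * K + 1)) = δ * ((L : ℝ) * K / ((L : ℝ) * K + 1)) := by
      ring
    have h7 : (L : ℝ) * K / ((L : ℝ) * K + 1) ≤ 1 := by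
      rw [div_le_one (by linarith)]; linarith
    rw [h6]
    calc δ * ((L : ℝ) * K / ((L : ℝ) * K + 1)) ≤ δ * 1 :=
          mul_le_mul_of_nonneg_left h7 hδ.le
      _ = δ := mul_one δ
  linarith

/-- Let `M₁ = P₁ - Q₁` be a bounded signed measure on `ℝ` with `M₁(ℝ) = 0` and
`∫|F_{M₁}| dλ < ∞`, and let `M₂ = P₂ - Q₂` be a bounded signed measure whose distribution
function is Lipschitz with constant `L`.  Then `‖M₁∗M₂‖_K ≤ L · ∫ |F_{M₁}|`.
(Since `M₁∗M₂` has total mass zero, its Kolmogorov norm is `sup_z |F_{M₁∗M₂}(z)|`.) -/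
theorem stmt1 (P₁ Q₁ P₂ Q₂ : Measure ℝ)
    [IsFiniteMeasure P₁] [IsFiniteMeasure Q₁] [IsFiniteMeasure P₂] [IsFiniteMeasure Q₂]
    (hmass : P₁ Set.univ = Q₁ Set.univ)
    (hint : Integrable (fun x => cdf' P₁ x - cdf' Q₁ x))
    (L : NNReal) (hL : LipschitzWith L (fun x => cdf' P₂ x - cdf' Q₂ x)) :
    ∀ z : ℝ,
      |(cdf' (mconv P₁ P₂) z + cdf' (mconv Q₁ Q₂) z) -
        (cdf' (mconv P₁ Q₂) z + cdf' (mconv Q₁ P₂) z)| ≤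
        (L : ℝ) * ∫ x, |cdf' P₁ x - cdf' Q₁ x| := by
  intro z
  rw [cdf'_mconv P₁ P₂ z, cdf'_mconv Q₁ Q₂ z, cdf'_mconv P₁ Q₂ z, cdf'_mconv Q₁ P₂ z]
  set φ : ℝ → ℝ := fun x => cdf' P₂ (z - x) - cdf' Q₂ (z - x) with hφdef
  have hcomp : ∀ (ν : Measure ℝ) [IsFiniteMeasure ν], Measurable fun x : ℝ => cdf' ν (z - x) :=
    fun ν _ => (cdf'_meas ν).comp (measurable_const.sub measurable_id)
  have hbd : ∀ (ν : Measure ℝ) [IsFiniteMeasure ν] (x : ℝ),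
      |cdf' ν (z - x)| ≤ (ν univ).toReal := fun ν _ x => by
    rw [abs_of_nonneg (cdf'_nonneg _ _)]; exact cdf'_le _ _
  have i1 : Integrable (fun x => cdf' P₂ (z - x)) P₁ :=
    integrable_bdd_meas _ (hcomp P₂) (hbd P₂)
  have i2 : Integrable (fun x => cdf' Q₂ (z - x)) P₁ :=
    integrable_bdd_meas _ (hcomp Q₂) (hbd Q₂)
  have i3 : Integrable (fun x => cdf' P₂ (z - x)) Q₁ :=
    integrable_bdd_meas _ (hcomp P₂) (hbd P₂)
  have i4 : Integrable (fun x => cdf' Q₂ (z - x)) Q₁ :=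
    integrable_bdd_meas _ (hcomp Q₂) (hbd Q₂)
  have hφm : Measurable φ := (hcomp P₂).sub (hcomp Q₂)
  have hφb : ∀ x, |φ x| ≤ (P₂ univ).toReal + (Q₂ univ).toReal := by
    intro x
    have h1 := cdf'_nonneg P₂ (z - x); have h2 := cdf'_le P₂ (z - x)
    have h3 := cdf'_nonneg Q₂ (z - x); have h4 := cdf'_le Q₂ (z - x)
    rw [hφdef, abs_le]; constructor <;> simp only [] <;> linarith
  have hφL : LipschitzWith L φ := by
    have h1 : LipschitzWith 1 (fun x : ℝ => z - x) := by
      refine LipschitzWith.of_dist_le_mul fun x y => ?_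
      rw [Real.dist_eq, Real.dist_eq, NNReal.coe_one, one_mul]
      have : z - x - (z - y) = -(x - y) := by ring
      rw [this, abs_neg]
    have := hL.comp h1
    simp only [mul_one] at this; exact this
  have heq : (∫ x, cdf' P₂ (z - x) ∂P₁ + ∫ x, cdf' Q₂ (z - x) ∂Q₁) -
      (∫ x, cdf' Q₂ (z - x) ∂P₁ + ∫ x, cdf' P₂ (z - x) ∂Q₁)
      = (∫ x, φ x ∂P₁) - ∫ x, φ x ∂Q₁ := by
    rw [hφdef]
    rw [integral_sub i1 i2, integral_sub i3 i4]
    ring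
  rw [heq]
  exact key P₁ Q₁ hint φ hφm _ hφb L hφL
end

section
/- Let a ≤ b and c ≤ d be real numbers, let U, V be finite positive Borel measures on ℝ supported in [a,b] and [c,d] respectively, with total masses p = U(ℝ) and q = V(ℝ). Then for z ∈ ℝ, the distribution function of the signed measure (p·δ_a − U) ∗ (q·δ_c − V) at z equals 0 if z < a+c or z ≥ b+d; is at most pq if a+c ≤ z < min(a+d, b+c); and is at most 0 if min(a+d, b+c) ≤ z < b+d. -/
open MeasureTheory Set
open scoped ENNReal

/-- Let `a ≤ b`, `c ≤ d`, and let `U, V` be finite positive Borel measures supported in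
`[a,b]` and `[c,d]` with total masses `p, q`.  Then the distribution function of
`(p·δ_a − U) ∗ (q·δ_c − V)` at `z` (computed by expanding the convolution) vanishes for
`z < a+c` and `z ≥ b+d`, is `≤ pq` for `a+c ≤ z < min(a+d, b+c)`, and is `≤ 0` for
`min(a+d, b+c) ≤ z < b+d`. -/
theorem stmt2 (a b c d : ℝ) (hab : a ≤ b) (hcd : c ≤ d)
    (U V : Measure ℝ) [IsFiniteMeasure U] [IsFiniteMeasure V]
    (hU : U (Set.Icc a b)ᶜ = 0) (hV : V (Set.Icc c d)ᶜ = 0)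
    (p q : ℝ) (hp : p = (U Set.univ).toReal) (hq : q = (V Set.univ).toReal) (z : ℝ)
    (F : ℝ)
    (hF : F = (if a + c ≤ z then p * q else 0)
      - p * (V (Set.Iic (z - a))).toReal - q * (U (Set.Iic (z - c))).toReal
      + (mconv U V (Set.Iic z)).toReal) :
    (z < a + c ∨ b + d ≤ z → F = 0) ∧
    (a + c ≤ z ∧ z < min (a + d) (b + c) → F ≤ p * q) ∧
    (min (a + d) (b + c) ≤ z ∧ z < b + d → F ≤ 0) := by
  set μ := U.prod V with hμ
  have hmap : mconv U V (Set.Iic z) = μ {r : ℝ × ℝ | r.1 + r.2 ≤ z} := by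
    rw [mconv, Measure.map_apply (by fun_prop) measurableSet_Iic]
    rfl
  have hS : μ ((Set.Icc a b ×ˢ Set.Icc c d)ᶜ) = 0 := by
    apply le_antisymm _ (zero_le)
    calc μ ((Set.Icc a b ×ˢ Set.Icc c d)ᶜ)
        ≤ μ (((Set.Icc a b)ᶜ ×ˢ (Set.univ : Set ℝ)) ∪ ((Set.univ : Set ℝ) ×ˢ (Set.Icc c d)ᶜ)) := by
          apply measure_mono
          intro r hr
          simp only [Set.mem_compl_iff, Set.mem_prod, Set.mem_union, Set.mem_univ,
            and_true, true_and] at *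
          tauto
      _ ≤ μ ((Set.Icc a b)ᶜ ×ˢ (Set.univ : Set ℝ)) + μ ((Set.univ : Set ℝ) ×ˢ (Set.Icc c d)ᶜ) :=
          measure_union_le _ _
      _ = 0 := by
          rw [hμ, Measure.prod_prod, Measure.prod_prod, hU, hV]
          simp
  have hae : ∀ᵐ r ∂μ, r ∈ Set.Icc a b ×ˢ Set.Icc c d := by
    rw [ae_iff]
    exact hS
  have hPQ : (μ Set.univ).toReal = p * q := by
    rw [hμ, ← Set.univ_prod_univ, Measure.prod_prod, ENNReal.toReal_mul, hp, hq]
  have hBval : (μ ((Set.univ : Set ℝ) ×ˢ Set.Iic (z - a))).toReal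
      = p * (V (Set.Iic (z - a))).toReal := by
    rw [hμ, Measure.prod_prod, ENNReal.toReal_mul, hp]
  have hCval : (μ (Set.Iic (z - c) ×ˢ (Set.univ : Set ℝ))).toReal
      = (U (Set.Iic (z - c))).toReal * q := by
    rw [hμ, Measure.prod_prod, ENNReal.toReal_mul, hq]
  have hpnn : 0 ≤ p := hp ▸ ENNReal.toReal_nonneg
  have hqnn : 0 ≤ q := hq ▸ ENNReal.toReal_nonneg
  have hV'nn : 0 ≤ (V (Set.Iic (z - a))).toReal := ENNReal.toReal_nonneg
  have hU'nn : 0 ≤ (U (Set.Iic (z - c))).toReal := ENNReal.toReal_nonneg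
  refine ⟨?_, ?_, ?_⟩
  · rintro (h | h)
    · -- z < a + c
      have hV0 : V (Set.Iic (z - a)) = 0 := by
        apply le_antisymm _ (zero_le)
        rw [← hV]
        apply measure_mono
        intro x hx
        simp only [Set.mem_Iic] at hx
        simp only [Set.mem_compl_iff, Set.mem_Icc, not_and, not_le]
        intro _
        linarith
      have hU0 : U (Set.Iic (z - c)) = 0 := by
        apply le_antisymm _ (zero_le)
        rw [← hU]
        apply measure_mono
        intro x hx
        simp only [Set.mem_Iic] at hx
        simp only [Set.mem_compl_iff, Set.mem_Icc, not_and, not_le]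
        intro _
        linarith
      have hC0 : μ {r : ℝ × ℝ | r.1 + r.2 ≤ z} = 0 := by
        apply le_antisymm _ (zero_le)
        rw [← hS]
        apply measure_mono
        intro r hr
        simp only [Set.mem_setOf_eq] at hr
        simp only [Set.mem_compl_iff, Set.mem_prod, Set.mem_Icc]
        rintro ⟨⟨h1, _⟩, h2, _⟩
        linarith
      rw [hF, hmap, hC0, hV0, hU0, if_neg (by linarith)]
      simp
    · -- b + d ≤ z
      have hVfull : V (Set.Iic (z - a)) = V Set.univ := by
        apply measure_congr
        rw [Filter.eventuallyEq_set]
        have hVae : ∀ᵐ y ∂V, y ∈ Set.Icc c d := by rw [ae_iff]; exact hV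
        filter_upwards [hVae] with y hy
        simp only [Set.mem_Iic, Set.mem_univ, iff_true]
        have := hy.2
        linarith
      have hUfull : U (Set.Iic (z - c)) = U Set.univ := by
        apply measure_congr
        rw [Filter.eventuallyEq_set]
        have hUae : ∀ᵐ x ∂U, x ∈ Set.Icc a b := by rw [ae_iff]; exact hU
        filter_upwards [hUae] with x hx
        simp only [Set.mem_Iic, Set.mem_univ, iff_true]
        have := hx.2
        linarith
      have hCfull : μ {r : ℝ × ℝ | r.1 + r.2 ≤ z} = μ Set.univ := by
        apply measure_congr
        rw [Filter.eventuallyEq_set]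
        filter_upwards [hae] with r hr
        simp only [Set.mem_setOf_eq, Set.mem_univ, iff_true]
        have h1 := hr.1.2
        have h2 := hr.2.2
        linarith
      rw [hF, hmap, hCfull, hVfull, hUfull, hPQ, ← hp, ← hq, if_pos (by linarith)]
      ring
  · rintro ⟨h1, _⟩
    have hCB : μ {r : ℝ × ℝ | r.1 + r.2 ≤ z} ≤ μ ((Set.univ : Set ℝ) ×ˢ Set.Iic (z - a)) := by
      apply measure_mono_ae
      filter_upwards [hae] with r hr hrA
      have hrA' : r.1 + r.2 ≤ z := hrA
      have := hr.1.1
      constructor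
      · trivial
      · simp only [Set.mem_Iic]; linarith
    have hCB' := ENNReal.toReal_mono (measure_ne_top μ _) hCB
    rw [hBval] at hCB'
    rw [hF, hmap, if_pos h1]
    nlinarith [mul_nonneg hqnn hU'nn]
  · rintro ⟨h1, _⟩
    have haz : a + c ≤ z := le_trans (by simp [le_min_iff]; constructor <;> linarith) h1
    have hz' : a + d ≤ z ∨ b + c ≤ z := min_le_iff.mp h1
    set B := (Set.univ : Set ℝ) ×ˢ Set.Iic (z - a) with hB
    set C := Set.Iic (z - c) ×ˢ (Set.univ : Set ℝ) with hC
    have hmC : MeasurableSet C := measurableSet_Iic.prod MeasurableSet.univ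
    have h2 : μ Set.univ ≤ μ (B ∪ C) := by
      apply measure_mono_ae
      filter_upwards [hae] with r hr _
      rcases hz' with hz | hz
      · left
        exact ⟨trivial, by simp only [Set.mem_Iic]; have := hr.2.2; linarith⟩
      · right
        exact ⟨by simp only [Set.mem_Iic]; have := hr.1.2; linarith, trivial⟩
    have h3 : μ {r : ℝ × ℝ | r.1 + r.2 ≤ z} ≤ μ (B ∩ C) := by
      apply measure_mono_ae
      filter_upwards [hae] with r hr hrA
      have hrA' : r.1 + r.2 ≤ z := hrA
      have hra := hr.1.1
      have hrc := hr.2.1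
      exact ⟨⟨trivial, by simp only [Set.mem_Iic]; linarith⟩,
        ⟨by simp only [Set.mem_Iic]; linarith, trivial⟩⟩
    have key : μ Set.univ + μ {r : ℝ × ℝ | r.1 + r.2 ≤ z} ≤ μ B + μ C := by
      calc μ Set.univ + μ {r : ℝ × ℝ | r.1 + r.2 ≤ z} ≤ μ (B ∪ C) + μ (B ∩ C) :=
            add_le_add h2 h3
        _ = μ B + μ C := measure_union_add_inter B hmC
    have key' := ENNReal.toReal_mono
      (by exact ENNReal.add_ne_top.mpr ⟨measure_ne_top μ _, measure_ne_top μ _⟩) key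
    rw [ENNReal.toReal_add (measure_ne_top μ _) (measure_ne_top μ _),
      ENNReal.toReal_add (measure_ne_top μ _) (measure_ne_top μ _), hPQ, hBval, hCval] at key'
    rw [hF, hmap, if_pos haz]
    linarith
end

section
/- Let R ∈ P(ℝ) have distribution function H and let ε ≥ 0. Then the set B = {P ∈ P(ℝ) : ∫|F_P − H| dλ ≤ ε} is compact in the topology of weak convergence of probability measures. -/
open MeasureTheory Set Filter Topology
open scoped ENNReal NNReal

noncomputable section StmtAux

/-- distribution function of a probability measure on ℝ, real valued. -/
def cdfR (P : ProbabilityMeasure ℝ) (x : ℝ) : ℝ := ((P : Measure ℝ) (Set.Iic x)).toReal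

lemma cdfR_mono (P : ProbabilityMeasure ℝ) : Monotone (cdfR P) := fun a b hab =>
  ENNReal.toReal_mono (measure_ne_top _ _) (measure_mono (Iic_subset_Iic.2 hab))

lemma cdfR_nonneg (P : ProbabilityMeasure ℝ) (x : ℝ) : 0 ≤ cdfR P x := ENNReal.toReal_nonneg

lemma cdfR_le_one (P : ProbabilityMeasure ℝ) (x : ℝ) : cdfR P x ≤ 1 := by
  have h : (P : Measure ℝ) (Set.Iic x) ≤ 1 := prob_le_one
  simpa [cdfR] using ENNReal.toReal_mono (by norm_num) h

lemma eIic (P : ProbabilityMeasure ℝ) (x : ℝ) :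
    (P : Measure ℝ) (Set.Iic x) = ENNReal.ofReal (cdfR P x) :=
  (ENNReal.ofReal_toReal (measure_ne_top _ _)).symm

lemma meas_Ioc (P : ProbabilityMeasure ℝ) {a b : ℝ} (hab : a ≤ b) :
    (P : Measure ℝ) (Set.Ioc a b) = (P : Measure ℝ) (Set.Iic b) - (P : Measure ℝ) (Set.Iic a) := by
  rw [← Iic_sdiff_Iic, measure_sdiff (Iic_subset_Iic.2 hab) measurableSet_Iic.nullMeasurableSet
    (measure_ne_top _ _)]

/-- Helly selection: a subsequence with pointwise convergence on the rationals. -/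
lemma helly (P : ℕ → ProbabilityMeasure ℝ) :
    ∃ (φ : ℕ → ℕ) (g : ℚ → ℝ), StrictMono φ ∧ Monotone g ∧ (∀ q, g q ∈ Icc (0:ℝ) 1) ∧
      ∀ q : ℚ, Tendsto (fun n ↦ cdfR (P (φ n)) (q:ℝ)) atTop (𝓝 (g q)) := by
  set T : ℕ → (ℚ → Icc (0:ℝ) 1) :=
    fun n q ↦ ⟨cdfR (P n) q, cdfR_nonneg _ _, cdfR_le_one _ _⟩ with hT
  obtain ⟨a, φ, hφ, ha⟩ := CompactSpace.tendsto_subseq T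
  have hconv : ∀ q : ℚ, Tendsto (fun n ↦ cdfR (P (φ n)) (q:ℝ)) atTop (𝓝 ((a q : ℝ))) := by
    intro q
    exact (continuous_subtype_val.tendsto _).comp (tendsto_pi_nhds.1 ha q)
  refine ⟨φ, fun q ↦ (a q : ℝ), hφ, ?_, fun q ↦ (a q).2, hconv⟩
  intro q r hqr
  exact le_of_tendsto_of_tendsto' (hconv q) (hconv r)
    (fun n => cdfR_mono _ (by exact_mod_cast hqr))

/-! ### The limiting distribution function -/

/-- candidate limit distribution function from values on rationals. -/
def limF (g : ℚ → ℝ) (x : ℝ) : ℝ := sInf (g '' {q : ℚ | x < (q:ℝ)})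

variable {g : ℚ → ℝ}

lemma limF_bddBelow (hg0 : ∀ q, 0 ≤ g q) (x : ℝ) : BddBelow (g '' {q : ℚ | x < (q:ℝ)}) :=
  ⟨0, fun y ⟨q, _, hq⟩ => hq ▸ hg0 q⟩

lemma limF_nonempty (x : ℝ) : (g '' {q : ℚ | x < (q:ℝ)}).Nonempty := by
  obtain ⟨q, hq⟩ := exists_rat_gt x
  exact ⟨g q, q, hq, rfl⟩

lemma limF_le (hg0 : ∀ q, 0 ≤ g q) {x : ℝ} {q : ℚ} (h : x < (q:ℝ)) : limF g x ≤ g q :=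
  csInf_le (limF_bddBelow hg0 x) ⟨q, h, rfl⟩

lemma le_limF {x : ℝ} {c : ℝ} (h : ∀ q : ℚ, x < (q:ℝ) → c ≤ g q) : c ≤ limF g x :=
  le_csInf (limF_nonempty x) (fun y ⟨q, hq, he⟩ => he ▸ h q hq)

lemma limF_nonneg (hg0 : ∀ q, 0 ≤ g q) (x : ℝ) : 0 ≤ limF g x :=
  le_limF fun q _ => hg0 q

lemma limF_le_one (hg0 : ∀ q, 0 ≤ g q) (hg1 : ∀ q, g q ≤ 1) (x : ℝ) : limF g x ≤ 1 := by
  obtain ⟨q, hq⟩ := exists_rat_gt x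
  exact (limF_le hg0 hq).trans (hg1 q)

lemma g_le_limF (hg : Monotone g) {q : ℚ} {x : ℝ} (h : (q:ℝ) ≤ x) : g q ≤ limF g x :=
  le_limF fun r hr => hg (by exact_mod_cast (h.trans_lt hr).le)

lemma limF_mono (hg0 : ∀ q, 0 ≤ g q) : Monotone (limF g) := fun x y hxy =>
  le_limF fun q hq => limF_le hg0 (hxy.trans_lt hq)

lemma exists_rat_limF_lt (hg0 : ∀ q, 0 ≤ g q) (x : ℝ) {c : ℝ} (h : limF g x < c) :
    ∃ q : ℚ, x < (q:ℝ) ∧ g q < c := by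
  obtain ⟨y, ⟨q, hq, he⟩, hy⟩ := exists_lt_of_csInf_lt (limF_nonempty x) h
  exact ⟨q, hq, he ▸ hy⟩

/-- the limiting Stieltjes function. -/
def limStieltjes (g : ℚ → ℝ) (hg0 : ∀ q, 0 ≤ g q) : StieltjesFunction ℝ where
  toFun := limF g
  mono' := limF_mono hg0
  right_continuous' := by
    intro x
    rw [Metric.continuousWithinAt_iff]
    intro η hη
    obtain ⟨q, hxq, hq⟩ := exists_rat_limF_lt hg0 x (lt_add_of_pos_right _ hη)
    refine ⟨(q:ℝ) - x, by linarith, ?_⟩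
    intro y hy hdy
    rw [Real.dist_eq] at hdy ⊢
    have h1 : limF g x ≤ limF g y := limF_mono hg0 hy
    have h2 : limF g y ≤ g q := by
      apply limF_le hg0
      have := abs_lt.1 hdy
      linarith [this.1, this.2]
    rw [abs_lt]
    constructor <;> linarith

end StmtAux

noncomputable section StmtAux2

variable {R : ProbabilityMeasure ℝ} {ε : ℝ}

lemma meas_cdf_abs (P Q : ProbabilityMeasure ℝ) :
    Measurable (fun x ↦ ENNReal.ofReal |cdfR P x - cdfR Q x|) :=
  (((cdfR_mono P).measurable.sub (cdfR_mono Q).measurable).abs).ennreal_ofReal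

/-- Key tail bound coming from the Wasserstein constraint. -/
lemma key_bound (hε : 0 ≤ ε)
    (P : ProbabilityMeasure ℝ)
    (hP : (∫⁻ x, ENNReal.ofReal |cdfR P x - cdfR R x|) ≤ ENNReal.ofReal ε)
    {a b : ℝ} (hab : a < b) :
    cdfR P a ≤ cdfR R b + ε / (b - a) ∧ cdfR R a ≤ cdfR P b + ε / (b - a) := by
  have hba : (0:ℝ) < b - a := by linarith
  have hdivnn : 0 ≤ ε / (b - a) := div_nonneg hε hba.le
  have main : ∀ c : ℝ, 0 < c → (∀ x ∈ Icc a b, c ≤ |cdfR P x - cdfR R x|) → c ≤ ε / (b - a) := by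
    intro c hc hcx
    have h1 : ENNReal.ofReal c * volume (Icc a b) ≤ ENNReal.ofReal ε := by
      calc ENNReal.ofReal c * volume (Icc a b)
          = ∫⁻ _ in Icc a b, ENNReal.ofReal c := by rw [setLIntegral_const, mul_comm]
        _ ≤ ∫⁻ x in Icc a b, ENNReal.ofReal |cdfR P x - cdfR R x| := by
            refine setLIntegral_mono (meas_cdf_abs P R) ?_
            intro x hx
            exact ENNReal.ofReal_le_ofReal (hcx x hx)
        _ ≤ ∫⁻ x, ENNReal.ofReal |cdfR P x - cdfR R x| := setLIntegral_le_lintegral _ _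
        _ ≤ ENNReal.ofReal ε := hP
    rw [Real.volume_Icc, ← ENNReal.ofReal_mul hc.le] at h1
    have h2 : c * (b - a) ≤ ε := by
      have := (ENNReal.ofReal_le_ofReal_iff hε).1 h1
      linarith
    rw [le_div_iff₀ hba]
    exact h2
  constructor
  · rcases le_or_gt (cdfR P a - cdfR R b) 0 with h | h
    · linarith
    · have := main _ h (fun x hx => by
        have h1 : cdfR P a ≤ cdfR P x := cdfR_mono P hx.1
        have h2 : cdfR R x ≤ cdfR R b := cdfR_mono R hx.2
        calc cdfR P a - cdfR R b ≤ cdfR P x - cdfR R x := by linarith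
          _ ≤ |cdfR P x - cdfR R x| := le_abs_self _)
      linarith
  · rcases le_or_gt (cdfR R a - cdfR P b) 0 with h | h
    · linarith
    · have := main _ h (fun x hx => by
        have h1 : cdfR R a ≤ cdfR R x := cdfR_mono R hx.1
        have h2 : cdfR P x ≤ cdfR P b := cdfR_mono P hx.2
        calc cdfR R a - cdfR P b ≤ cdfR R x - cdfR P x := by linarith
          _ ≤ |cdfR P x - cdfR R x| := by rw [abs_sub_comm]; exact le_abs_self _)
      linarith

/-- convergence of cdfs at continuity points of the limit. -/
lemma tendsto_cdfR_limF {g : ℚ → ℝ} (hg0 : ∀ q, 0 ≤ g q)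
    (P : ℕ → ProbabilityMeasure ℝ)
    (hconv : ∀ q : ℚ, Tendsto (fun n ↦ cdfR (P n) (q:ℝ)) atTop (𝓝 (g q)))
    {x : ℝ} (hx : ContinuousAt (limF g) x) :
    Tendsto (fun n ↦ cdfR (P n) x) atTop (𝓝 (limF g x)) := by
  refine tendsto_order.2 ⟨?_, ?_⟩
  · intro a ha
    have hη : (0:ℝ) < limF g x - a := by linarith
    obtain ⟨δ, hδ, hδ'⟩ := Metric.continuousAt_iff.1 hx _ hη
    set y := x - δ/2 with hy
    have hyx : y < x := by simp [hy]; linarith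
    have h1 : |limF g y - limF g x| < limF g x - a := by
      apply hδ'
      rw [Real.dist_eq, hy]
      rw [abs_lt]
      constructor <;> [linarith; linarith]
    have h2 : a < limF g y := by
      have := abs_lt.1 h1
      linarith [this.1]
    obtain ⟨q, hyq, hqx⟩ := exists_rat_btwn hyx
    have hgq : a < g q := h2.trans_le (limF_le hg0 hyq)
    filter_upwards [(tendsto_order.1 (hconv q)).1 a hgq] with n hn
    exact hn.trans_le (cdfR_mono _ hqx.le)
  · intro b hb
    obtain ⟨q, hxq, hq⟩ := exists_rat_limF_lt hg0 x hb
    filter_upwards [(tendsto_order.1 (hconv q)).2 b hq] with n hn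
    exact lt_of_le_of_lt (cdfR_mono _ hxq.le) hn

end StmtAux2

noncomputable section StmtAux3

/-- Portmanteau hypothesis: liminf bound over open sets, from convergence of `Iic`-measures
on a dense set. -/
lemma liminf_open_aux (Q : ProbabilityMeasure ℝ) (Pn : ℕ → ProbabilityMeasure ℝ) (D : Set ℝ)
    (hDdense : Dense D)
    (hconv : ∀ x ∈ D, Tendsto (fun n ↦ (Pn n : Measure ℝ) (Iic x)) atTop
      (𝓝 ((Q : Measure ℝ) (Iic x))))
    (G : Set ℝ) (hG : IsOpen G) : Q G ≤ atTop.liminf (fun i ↦ Pn i G) := by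
  classical
  by_contra hcon
  rw [not_le] at hcon
  obtain ⟨c, hc1, hc2⟩ := exists_between hcon
  have hcQ : (c : ℝ≥0∞) < (Q : Measure ℝ) G := by
    rw [← Q.ennreal_coeFn_eq_coeFn_toMeasure]
    exact_mod_cast hc2
  obtain ⟨K, hKG, hK, hcK⟩ :=
    hG.measurableSet.exists_lt_isCompact_of_ne_top (measure_ne_top _ G) hcQ
  obtain ⟨δ, hδ, hthick⟩ := hK.exists_thickening_subset_open hG hKG
  obtain ⟨M, hKM⟩ : ∃ M : ℝ, K ⊆ Icc (-M) M := by
    obtain ⟨M, hM⟩ := hK.isBounded.subset_closedBall 0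
    exact ⟨M, by simpa [Real.closedBall_eq_Icc] using hM⟩
  -- grid of continuity points
  have hf : ∀ y : ℝ, ∃ z, z ∈ D ∧ y + δ/3 < z ∧ z < y + δ/2 := by
    intro y
    obtain ⟨z, hz, h1, h2⟩ := hDdense.exists_between (show y + δ/3 < y + δ/2 by linarith)
    exact ⟨z, hz, h1, h2⟩
  choose f hfD hf1 hf2 using hf
  obtain ⟨x0, hx0D, hx01, hx02⟩ : ∃ z, z ∈ D ∧ -M - 1 < z ∧ z < -M := by
    obtain ⟨z, hz, h1, h2⟩ := hDdense.exists_between (show -M - 1 < -M by linarith)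
    exact ⟨z, hz, h1, h2⟩
  set x : ℕ → ℝ := fun n ↦ f^[n] x0 with hxdef
  have hx_succ : ∀ n, x (n+1) = f (x n) := fun n => Function.iterate_succ_apply' f n x0
  have hxD : ∀ n, x n ∈ D := by
    intro n
    induction n with
    | zero => exact hx0D
    | succ k _ => rw [hx_succ]; exact hfD _
  have hstep1 : ∀ n, x n + δ/3 < x (n+1) := fun n => by rw [hx_succ]; exact hf1 _
  have hstep2 : ∀ n, x (n+1) < x n + δ/2 := fun n => by rw [hx_succ]; exact hf2 _
  have hxmono : StrictMono x := strictMono_nat_of_lt_succ (fun n => by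
    have := hstep1 n; linarith)
  have hgrow : ∀ n : ℕ, x 0 + n * (δ/3) ≤ x n := by
    intro n
    induction n with
    | zero => simp
    | succ k ih =>
      have := hstep1 k
      push_cast
      push_cast at ih
      linarith
  obtain ⟨m, hm⟩ : ∃ m : ℕ, M < x m := by
    obtain ⟨m, hm⟩ := exists_nat_gt ((M - x 0) / (δ/3))
    refine ⟨m, ?_⟩
    have h3 : (0:ℝ) < δ/3 := by linarith
    have := hgrow m
    rw [div_lt_iff₀ h3] at hm
    linarith
  -- covering lemma
  have cover : ∀ k : ℕ, ∀ y ∈ Ioc (x 0) (x k), ∃ i < k, y ∈ Ioc (x i) (x (i+1)) := by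
    intro k
    induction k with
    | zero => intro y hy; exact absurd (hy.1.trans_le hy.2) (lt_irrefl _)
    | succ j ih =>
      intro y hy
      rcases le_or_gt y (x j) with h | h
      · obtain ⟨i, hi, hyi⟩ := ih y ⟨hy.1, h⟩
        exact ⟨i, by omega, hyi⟩
      · exact ⟨j, by omega, h, hy.2⟩
  set I : ℕ → Set ℝ := fun i ↦ Ioc (x i) (x (i+1)) with hIdef
  set T := (Finset.range m).filter (fun i ↦ (K ∩ I i).Nonempty) with hTdef
  have hKT : K ⊆ ⋃ i ∈ T, I i := by
    intro y hy
    have hyM := hKM hy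
    have hy' : y ∈ Ioc (x 0) (x m) := ⟨lt_of_lt_of_le hx02 hyM.1, hyM.2.trans hm.le⟩
    obtain ⟨i, him, hyi⟩ := cover m y hy'
    exact mem_biUnion (Finset.mem_filter.2 ⟨Finset.mem_range.2 him, ⟨y, hy, hyi⟩⟩) hyi
  have hTG : ∀ i ∈ T, I i ⊆ G := by
    intro i hi y hy
    obtain ⟨z, hzK, hzI⟩ := (Finset.mem_filter.1 hi).2
    apply hthick
    rw [Metric.mem_thickening_iff]
    refine ⟨z, hzK, ?_⟩
    rw [Real.dist_eq, abs_lt]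
    have h1 := hy.1; have h2 := hy.2
    have h3 := hzI.1; have h4 := hzI.2
    have h5 := hstep2 i
    constructor <;> linarith
  have hdisj : (T : Set ℕ).PairwiseDisjoint I := by
    intro i _ j _ hij
    have : ∀ a b : ℕ, a < b → Disjoint (I a) (I b) := by
      intro a b hab
      refine Ioc_disjoint_Ioc.2 ?_
      have : x (a+1) ≤ x b := hxmono.monotone (by omega)
      exact le_trans (min_le_left _ _) (le_trans this (le_max_right _ _))
    rcases lt_or_gt_of_ne hij with h | h
    · exact this i j h
    · exact (this j i h).symm
  -- measure convergence per interval
  have hIconv : ∀ i, Tendsto (fun n ↦ (Pn n : Measure ℝ) (I i)) atTop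
      (𝓝 ((Q : Measure ℝ) (I i))) := by
    intro i
    have hab : x i ≤ x (i+1) := (hxmono (Nat.lt_succ_self i)).le
    have e1 : ∀ P : ProbabilityMeasure ℝ, (P : Measure ℝ) (I i)
        = (P : Measure ℝ) (Iic (x (i+1))) - (P : Measure ℝ) (Iic (x i)) :=
      fun P => meas_Ioc P hab
    simp only [e1]
    exact ENNReal.Tendsto.sub (hconv _ (hxD (i+1))) (hconv _ (hxD i))
      (Or.inl (measure_ne_top _ _))
  have hsum : Tendsto (fun n ↦ ∑ i ∈ T, (Pn n : Measure ℝ) (I i)) atTop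
      (𝓝 (∑ i ∈ T, (Q : Measure ℝ) (I i))) := tendsto_finset_sum T fun i _ => hIconv i
  have hcsum : (c : ℝ≥0∞) < ∑ i ∈ T, (Q : Measure ℝ) (I i) :=
    hcK.trans_le ((measure_mono hKT).trans (measure_biUnion_finset_le T I))
  have hev : ∀ᶠ n in atTop, (c : ℝ≥0∞) < (Pn n : Measure ℝ) G := by
    filter_upwards [(tendsto_order.1 hsum).1 c hcsum] with n hn
    calc (c : ℝ≥0∞) < ∑ i ∈ T, (Pn n : Measure ℝ) (I i) := hn
      _ = (Pn n : Measure ℝ) (⋃ i ∈ T, I i) :=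
          (measure_biUnion_finset hdisj (fun i _ => measurableSet_Ioc)).symm
      _ ≤ (Pn n : Measure ℝ) G := measure_mono (iUnion₂_subset hTG)
  have hliminf : c ≤ atTop.liminf (fun i ↦ Pn i G) := by
    apply le_liminf_of_le
    · exact (isBoundedUnder_of ⟨1, fun n => (Pn n).apply_le_one G⟩).isCoboundedUnder_ge
    · filter_upwards [hev] with n hn
      have : (c : ℝ≥0∞) ≤ ((Pn n G : ℝ≥0) : ℝ≥0∞) := by
        rw [ProbabilityMeasure.ennreal_coeFn_eq_coeFn_toMeasure]
        exact hn.le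
      exact_mod_cast this
  exact lt_irrefl c (hliminf.trans_lt hc1)

end StmtAux3

/-- Let `R` be a probability measure on `ℝ` with distribution function `H` and `ε ≥ 0`.
Then the (possibly degenerate) Wasserstein ball
`B = {P : ∫ |F_P − H| dλ ≤ ε}` is compact in the topology of weak convergence of
probability measures. -/
theorem stmt3 (R : ProbabilityMeasure ℝ) (ε : ℝ) (hε : 0 ≤ ε) :
    IsCompact {P : ProbabilityMeasure ℝ |
      (∫⁻ x, ENNReal.ofReal
          |((P : Measure ℝ) (Set.Iic x)).toReal - ((R : Measure ℝ) (Set.Iic x)).toReal|)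
        ≤ ENNReal.ofReal ε} := by
  letI : MetricSpace (ProbabilityMeasure ℝ) := TopologicalSpace.metrizableSpaceMetric _
  apply IsSeqCompact.isCompact
  intro P hP
  obtain ⟨φ, g, hφ, hgmono, hgmem, hgconv⟩ := helly P
  set Pn : ℕ → ProbabilityMeasure ℝ := fun n ↦ P (φ n) with hPndef
  have hPnB : ∀ n, (∫⁻ x, ENNReal.ofReal |cdfR (Pn n) x - cdfR R x|) ≤ ENNReal.ofReal ε :=
    fun n => hP (φ n)
  have hg0 : ∀ q, 0 ≤ g q := fun q => (hgmem q).1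
  have hg1 : ∀ q, g q ≤ 1 := fun q => (hgmem q).2
  -- tails of H
  have h0 : Tendsto (fun y : ℝ ↦ (R : Measure ℝ) (Iic y)) atBot (𝓝 0) := by
    have h := tendsto_measure_iInter_atBot (μ := (R : Measure ℝ)) (s := Iic)
      (fun y => measurableSet_Iic.nullMeasurableSet)
      (fun a b hab => Iic_subset_Iic.2 hab) ⟨0, measure_ne_top _ _⟩
    have he : ⋂ y : ℝ, Iic y = (∅ : Set ℝ) := by
      ext z
      simp only [mem_iInter, mem_Iic, mem_empty_iff_false, iff_false]
      push_neg
      exact ⟨z - 1, by linarith⟩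
    rw [he, measure_empty] at h
    exact h
  have hH0 : Tendsto (cdfR R) atBot (𝓝 0) := by
    have := (ENNReal.tendsto_toReal (a := 0) (by simp)).comp h0
    exact this
  have hH1 : Tendsto (cdfR R) atTop (𝓝 1) := by
    have h1 := tendsto_measure_Iic_atTop (R : Measure ℝ)
    rw [measure_univ] at h1
    have := (ENNReal.tendsto_toReal (a := 1) (by simp)).comp h1
    exact this
  -- bounds on g from the Wasserstein constraint
  have keyg1 : ∀ (q : ℚ) (b : ℝ), (q:ℝ) < b → g q ≤ cdfR R b + ε / (b - (q:ℝ)) := fun q b h =>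
    le_of_tendsto (hgconv q)
      (Eventually.of_forall fun n => (key_bound hε (Pn n) (hPnB n) h).1)
  have keyg2 : ∀ (a : ℝ) (q : ℚ), a < (q:ℝ) → cdfR R a ≤ g q + ε / ((q:ℝ) - a) := by
    intro a q h
    have h2 : ∀ n, cdfR R a - ε / ((q:ℝ) - a) ≤ cdfR (Pn n) q := by
      intro n
      linarith [(key_bound hε (Pn n) (hPnB n) h).2]
    have := ge_of_tendsto (hgconv q) (Eventually.of_forall h2)
    linarith
  set F := limF g with hFdef
  -- tail behaviour of F
  have hbot : Tendsto F atBot (𝓝 0) := by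
    refine tendsto_order.2 ⟨?_, ?_⟩
    · intro a ha
      exact Eventually.of_forall fun x => ha.trans_le (limF_nonneg hg0 x)
    · intro b hb
      obtain ⟨b₀, hb₀⟩ := ((tendsto_order.1 hH0).2 (b/2) (by linarith)).exists
      rw [eventually_atBot]
      refine ⟨b₀ - 2 - 2*ε/b, fun x hx => ?_⟩
      obtain ⟨q, hq1, hq2⟩ := exists_rat_btwn (lt_add_one x)
      have hεb : 0 ≤ 2*ε/b := div_nonneg (by linarith) hb.le
      have hqb : (q:ℝ) < b₀ := by linarith
      have hd : b₀ - (q:ℝ) ≥ 2*ε/b + 1 := by linarith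
      have hεd : ε / (b₀ - (q:ℝ)) ≤ b/2 := by
        rw [div_le_iff₀ (by linarith)]
        have : b/2 * (2*ε/b) = ε := by field_simp
        nlinarith
      calc F x ≤ g q := limF_le hg0 hq1
        _ ≤ cdfR R b₀ + ε / (b₀ - (q:ℝ)) := keyg1 q b₀ hqb
        _ < b := by linarith
  have htop : Tendsto F atTop (𝓝 1) := by
    refine tendsto_order.2 ⟨?_, ?_⟩
    · intro a ha
      set η := (1 - a)/2 with hη
      have hηpos : 0 < η := by rw [hη]; linarith
      obtain ⟨a₀, ha₀⟩ := ((tendsto_order.1 hH1).1 (1 - η) (by linarith)).exists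
      rw [eventually_atTop]
      refine ⟨a₀ + 2 + 2*ε/(1-a), fun x hx => ?_⟩
      obtain ⟨q, hq1, hq2⟩ := exists_rat_btwn (show x - 1 < x by linarith)
      have hεa : 0 ≤ 2*ε/(1-a) := div_nonneg (by linarith) (by linarith)
      have hd : (q:ℝ) - a₀ ≥ 2*ε/(1-a) + 1 := by linarith
      have haq : a₀ < (q:ℝ) := by linarith
      have hεd : ε / ((q:ℝ) - a₀) ≤ η := by
        rw [div_le_iff₀ (by linarith)]
        have h1a : (1:ℝ) - a ≠ 0 := by linarith
        have : η * (2*ε/(1-a)) = ε := by rw [hη]; field_simp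
        nlinarith
      have h5 := keyg2 a₀ q haq
      calc a = (1 - η) - η := by rw [hη]; ring
        _ < cdfR R a₀ - η := by linarith
        _ ≤ g q + ε / ((q:ℝ) - a₀) - η := by linarith
        _ ≤ g q := by linarith
        _ ≤ F x := g_le_limF hgmono hq2.le
    · intro b hb
      exact Eventually.of_forall fun x => (limF_le_one hg0 hg1 x).trans_lt hb
  set Fs := limStieltjes g hg0 with hFsdef
  have hprob : IsProbabilityMeasure Fs.measure := by
    constructor
    rw [Fs.measure_univ (l := 0) (u := 1) hbot htop]
    norm_num
  set Q : ProbabilityMeasure ℝ := ⟨Fs.measure, hprob⟩ with hQdef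
  have hQIic : ∀ x, (Q : Measure ℝ) (Iic x) = ENNReal.ofReal (F x) := by
    intro x
    show Fs.measure (Iic x) = _
    rw [Fs.measure_Iic (l := 0) hbot, sub_zero]
    rfl
  have hQcdf : ∀ x, cdfR Q x = F x := by
    intro x
    rw [cdfR, hQIic, ENNReal.toReal_ofReal (limF_nonneg hg0 x)]
  -- continuity points
  have hDco : {x | ¬ContinuousAt F x}.Countable := (limF_mono hg0).countable_not_continuousAt
  have hDdense : Dense {x | ContinuousAt F x} := by
    have h := hDco.dense_compl ℝ
    have he : {x | ¬ContinuousAt F x}ᶜ = {x | ContinuousAt F x} := by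
      ext z; simp
    rwa [he] at h
  have hDconv : ∀ x ∈ {x | ContinuousAt F x}, Tendsto (fun n ↦ cdfR (Pn n) x) atTop (𝓝 (F x)) :=
    fun x hx => tendsto_cdfR_limF hg0 Pn hgconv hx
  -- weak convergence
  have hweak : Tendsto Pn atTop (𝓝 Q) := by
    apply tendsto_of_forall_isOpen_le_liminf
    intro G hG
    apply liminf_open_aux Q Pn {x | ContinuousAt F x} hDdense _ G hG
    intro x hx
    have h1 : Tendsto (fun n ↦ ENNReal.ofReal (cdfR (Pn n) x)) atTop
        (𝓝 (ENNReal.ofReal (F x))) :=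
      (ENNReal.continuous_ofReal.tendsto _).comp (hDconv x hx)
    rw [hQIic x]
    simpa only [eIic] using h1
  -- Q is in the ball (Fatou)
  have hQB : (∫⁻ x, ENNReal.ofReal |cdfR Q x - cdfR R x|) ≤ ENNReal.ofReal ε := by
    have hcont : ∀ᵐ x : ℝ, ContinuousAt F x := by
      rw [ae_iff]
      exact hDco.measure_zero _
    have hae : ∀ᵐ x : ℝ, ENNReal.ofReal |cdfR Q x - cdfR R x| ≤
        atTop.liminf (fun n ↦ ENNReal.ofReal |cdfR (Pn n) x - cdfR R x|) := by
      filter_upwards [hcont] with x hx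
      have h1 : Tendsto (fun n ↦ ENNReal.ofReal |cdfR (Pn n) x - cdfR R x|) atTop
          (𝓝 (ENNReal.ofReal |cdfR Q x - cdfR R x|)) := by
        rw [hQcdf]
        exact (ENNReal.continuous_ofReal.tendsto _).comp (((hDconv x hx).sub_const _).abs)
      exact h1.liminf_eq.ge
    calc (∫⁻ x, ENNReal.ofReal |cdfR Q x - cdfR R x|)
        ≤ ∫⁻ x, atTop.liminf (fun n ↦ ENNReal.ofReal |cdfR (Pn n) x - cdfR R x|) :=
          lintegral_mono_ae hae
      _ ≤ atTop.liminf (fun n ↦ ∫⁻ x, ENNReal.ofReal |cdfR (Pn n) x - cdfR R x|) :=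
          lintegral_liminf_le (fun n => meas_cdf_abs _ _)
      _ ≤ ENNReal.ofReal ε := liminf_le_of_frequently_le' (Frequently.of_forall hPnB)
  exact ⟨Q, hQB, φ, hφ, hweak⟩
end

section
/- Let r ∈ (0,∞) and M be a bounded signed measure on ℝ. Then ν_r(M) := ∫|x|^r d|M|(x) equals ∫ r|x|^{r−1} |h_{|M|}(x)| dx, and this is at least κ_r(M) := ∫ r|x|^{r−1} |h_M(x)| dx, where h_M = 1_{(0,∞)}·M([·,∞)) − 1_{(−∞,0)}·M((−∞,·]). -/
open MeasureTheory Set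
open scoped ENNReal

/-- `h_M(x) = M([x,∞))` for `x > 0`, `h_M(x) = −M((−∞,x])` for `x < 0`, `h_M(0) = 0`. -/
noncomputable def hFun (M : MeasureTheory.SignedMeasure ℝ) (x : ℝ) : ℝ :=
  if 0 < x then M (Set.Ici x) else if x < 0 then -(M (Set.Iic x)) else 0

/-- The analogue of `h` for the total variation measure `|M|`. -/
noncomputable def hAbs (M : MeasureTheory.SignedMeasure ℝ) (x : ℝ) : ℝ :=
  if 0 < x then (M.totalVariation (Set.Ici x)).toReal
  else if x < 0 then -((M.totalVariation (Set.Iic x)).toReal) else 0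

lemma abs_apply_le_tv (M : SignedMeasure ℝ) {s : Set ℝ} (hs : MeasurableSet s) :
    |M s| ≤ (M.totalVariation s).toReal := by
  have h := M.toSignedMeasure_toJordanDecomposition
  set J := M.toJordanDecomposition with hJ
  have hM : M s = (J.posPart s).toReal - (J.negPart s).toReal := by
    conv_lhs => rw [← h]
    rw [JordanDecomposition.toSignedMeasure, VectorMeasure.sub_apply,
      Measure.toSignedMeasure_apply_measurable hs, Measure.toSignedMeasure_apply_measurable hs]
    rfl
  have htv : (M.totalVariation s).toReal = (J.posPart s).toReal + (J.negPart s).toReal := by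
    rw [SignedMeasure.totalVariation, Measure.add_apply,
      ENNReal.toReal_add (measure_ne_top _ _) (measure_ne_top _ _)]
  rw [hM, htv]
  calc |(J.posPart s).toReal - (J.negPart s).toReal|
      ≤ |(J.posPart s).toReal| + |(J.negPart s).toReal| := abs_sub _ _
    _ = _ := by rw [abs_of_nonneg ENNReal.toReal_nonneg, abs_of_nonneg ENNReal.toReal_nonneg]

lemma hFun_le_hAbs (M : SignedMeasure ℝ) (x : ℝ) : |hFun M x| ≤ |hAbs M x| := by
  unfold hFun hAbs
  rcases lt_trichotomy 0 x with h | h | h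
  · simp only [if_pos h]
    rw [abs_of_nonneg (ENNReal.toReal_nonneg)]
    exact abs_apply_le_tv M measurableSet_Ici
  · simp [← h]
  · simp only [if_neg (not_lt.mpr h.le), if_pos h, abs_neg]
    rw [abs_of_nonneg (ENNReal.toReal_nonneg)]
    exact abs_apply_le_tv M measurableSet_Iic

set_option maxHeartbeats 1000000 in
/-- For `r ∈ (0,∞)` and a bounded signed measure `M` on `ℝ`:
`ν_r(M) = ∫ |x|^r d|M|(x)` equals `∫ r|x|^{r−1} |h_{|M|}(x)| dx`, and this is at least
`κ_r(M) = ∫ r|x|^{r−1} |h_M(x)| dx`. -/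
theorem stmt5 (r : ℝ) (hr : 0 < r) (M : SignedMeasure ℝ) :
    (∫⁻ x, ENNReal.ofReal (|x| ^ r) ∂M.totalVariation)
      = (∫⁻ x, ENNReal.ofReal (r * |x| ^ (r - 1) * |hAbs M x|)) ∧
    (∫⁻ x, ENNReal.ofReal (r * |x| ^ (r - 1) * |hFun M x|))
      ≤ ∫⁻ x, ENNReal.ofReal (r * |x| ^ (r - 1) * |hAbs M x|) := by
  have finst : IsFiniteMeasure M.totalVariation := by
    rw [MeasureTheory.SignedMeasure.totalVariation]; infer_instance
  set μ := M.totalVariation with hμ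
  constructor
  · -- main equality
    set A : ℝ → ℝ≥0∞ := fun t => μ (Ici t) * ENNReal.ofReal (t ^ (r - 1)) with hA
    set B : ℝ → ℝ≥0∞ := fun t => μ (Iic (-t)) * ENNReal.ofReal (t ^ (r - 1)) with hB
    have measA : Measurable A := by
      have ant : Antitone (fun t : ℝ => μ (Ici t)) :=
        fun s t hst => measure_mono (Ici_subset_Ici.mpr hst)
      exact ant.measurable.mul (ENNReal.measurable_ofReal.comp (measurable_id.pow_const _))
    have lhs_eq : (∫⁻ x, ENNReal.ofReal (|x| ^ r) ∂μ)
        = (∫⁻ t in Ioi 0, ENNReal.ofReal r * A t) + ∫⁻ t in Ioi 0, ENNReal.ofReal r * B t := by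
      rw [lintegral_rpow_eq_lintegral_meas_le_mul μ (ae_of_all _ fun x => abs_nonneg x)
        measurable_abs.aemeasurable hr]
      have hcongr : ∫⁻ t in Ioi 0, μ {a : ℝ | t ≤ |a|} * ENNReal.ofReal (t ^ (r - 1))
          = ∫⁻ t in Ioi 0, (A t + B t) := by
        apply setLIntegral_congr_fun measurableSet_Ioi
        intro t ht; beta_reduce
        have hset : {a : ℝ | t ≤ |a|} = Ici t ∪ Iic (-t) := by
          ext a
          simp only [mem_setOf_eq, le_abs, mem_union, mem_Ici, mem_Iic, le_neg]
        have hdisj : Disjoint (Ici t) (Iic (-t)) := by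
          rw [Set.disjoint_left]
          intro a ha hb
          simp only [mem_Ici] at ha
          simp only [mem_Iic] at hb
          simp only [mem_Ioi] at ht
          linarith
        rw [hset, measure_union' hdisj measurableSet_Ici, add_mul]
      rw [hcongr, lintegral_add_left measA, mul_add,
        ← lintegral_const_mul' _ _ ENNReal.ofReal_ne_top,
        ← lintegral_const_mul' _ _ ENNReal.ofReal_ne_top]
    rw [lhs_eq]
    -- now the RHS
    set F : ℝ → ℝ≥0∞ := fun x => ENNReal.ofReal (r * |x| ^ (r - 1) * |hAbs M x|) with hF
    have split : (∫⁻ x, F x) = (∫⁻ x in Ioi 0, F x) + ∫⁻ x in Iio 0, F x := by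
      rw [← lintegral_add_compl F measurableSet_Ioi, compl_Ioi]
      congr 1
      exact setLIntegral_congr (Iio_ae_eq_Iic (a := (0:ℝ))).symm
    have negsub : (∫⁻ x in Iio (0:ℝ), F x) = ∫⁻ t in Ioi (0:ℝ), F (-t) := by
      have hpre : (Neg.neg ⁻¹' (Iio (0:ℝ)) : Set ℝ) = Ioi 0 := by
        ext x; simp
      rw [← (Measure.measurePreserving_neg (volume : Measure ℝ)).setLIntegral_comp_preimage_emb
        measurableEmbedding_neg F (Iio 0), hpre]
    have pos_eq : (∫⁻ x in Ioi (0:ℝ), F x) = ∫⁻ t in Ioi 0, ENNReal.ofReal r * A t := by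
      apply setLIntegral_congr_fun measurableSet_Ioi
      intro t ht; beta_reduce
      simp only [mem_Ioi] at ht
      rw [hF]
      simp only [hAbs, if_pos ht, abs_of_pos ht, abs_of_nonneg (ENNReal.toReal_nonneg)]
      rw [ENNReal.ofReal_mul (by positivity), ENNReal.ofReal_mul hr.le,
        ENNReal.ofReal_toReal (measure_ne_top μ _), hA]
      ring
    have neg_eq : (∫⁻ t in Ioi (0:ℝ), F (-t)) = ∫⁻ t in Ioi 0, ENNReal.ofReal r * B t := by
      apply setLIntegral_congr_fun measurableSet_Ioi
      intro t ht; beta_reduce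
      simp only [mem_Ioi] at ht
      rw [hF]
      simp only [hAbs, if_neg (not_lt.mpr (neg_nonpos.mpr ht.le)), if_pos (neg_neg_iff_pos.mpr ht),
        abs_neg, abs_of_pos ht, abs_of_nonneg (ENNReal.toReal_nonneg)]
      rw [ENNReal.ofReal_mul (by positivity), ENNReal.ofReal_mul hr.le,
        ENNReal.ofReal_toReal (measure_ne_top μ _), hB]
      ring
    rw [split, negsub, pos_eq, neg_eq]
  · apply lintegral_mono
    intro x
    apply ENNReal.ofReal_le_ofReal
    have h1 : 0 ≤ r * |x| ^ (r - 1) := by positivity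
    exact mul_le_mul_of_nonneg_left (hFun_le_hAbs M x) h1
end

section
/- Let 0 < r < s < ∞ and M a bounded signed measure on ℝ. Then κ_r(M) ≤ 2^{1−r/s} ‖M‖_K^{1−r/s} κ_s(M)^{r/s}, where κ_t(M) = ∫ t|x|^{t−1}|h_M(x)| dx and ‖M‖_K is the Kolmogorov norm. -/
open MeasureTheory Set
open scoped ENNReal

/-- Kolmogorov norm `‖M‖_K = sup_x max(|M((−∞,x])|, |M([x,∞))|)`, valued in `[0,∞]`. -/
noncomputable def kolNorm (M : MeasureTheory.SignedMeasure ℝ) : ℝ≥0∞ :=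
  ⨆ x : ℝ, ENNReal.ofReal (max |M (Set.Iic x)| |M (Set.Ici x)|)

/-- `κ_t(M) = ∫ t|x|^{t−1}|h_M(x)| dx`, valued in `[0,∞]`. -/
noncomputable def kappa (t : ℝ) (M : MeasureTheory.SignedMeasure ℝ) : ℝ≥0∞ :=
  ∫⁻ x, ENNReal.ofReal (t * |x| ^ (t - 1) * |hFun M x|)

namespace Aux6

open intervalIntegral

/-- the weight function -/
noncomputable def w (t : ℝ) (x : ℝ) : ℝ≥0∞ := ENNReal.ofReal (t * |x| ^ (t - 1))

lemma measurable_w (t : ℝ) : Measurable (w t) :=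
  ENNReal.measurable_ofReal.comp (measurable_const.mul (measurable_id.abs.pow measurable_const))

lemma measurable_Iic_apply (M : SignedMeasure ℝ) : Measurable fun x => M (Iic x) := by
  have h : ∀ x : ℝ, M (Iic x) = (M.toJordanDecomposition.posPart (Iic x)).toReal
      - (M.toJordanDecomposition.negPart (Iic x)).toReal := by
    intro x
    conv_lhs => rw [← M.toSignedMeasure_toJordanDecomposition]
    rw [JordanDecomposition.toSignedMeasure, VectorMeasure.sub_apply,
      Measure.toSignedMeasure_apply_measurable measurableSet_Iic,
      Measure.toSignedMeasure_apply_measurable measurableSet_Iic]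
    rfl
  simp_rw [h]
  have mono : ∀ (μ : Measure ℝ) [IsFiniteMeasure μ],
      Monotone fun x : ℝ => (μ (Iic x)).toReal := by
    intro μ _ a b hab
    exact ENNReal.toReal_mono (measure_ne_top μ _) (measure_mono (Iic_subset_Iic.2 hab))
  exact ((mono _).measurable).sub ((mono _).measurable)

lemma measurable_Ici_apply (M : SignedMeasure ℝ) : Measurable fun x => M (Ici x) := by
  have h : ∀ x : ℝ, M (Ici x) = (M.toJordanDecomposition.posPart (Ici x)).toReal
      - (M.toJordanDecomposition.negPart (Ici x)).toReal := by
    intro x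
    conv_lhs => rw [← M.toSignedMeasure_toJordanDecomposition]
    rw [JordanDecomposition.toSignedMeasure, VectorMeasure.sub_apply,
      Measure.toSignedMeasure_apply_measurable measurableSet_Ici,
      Measure.toSignedMeasure_apply_measurable measurableSet_Ici]
    rfl
  simp_rw [h]
  have mono : ∀ (μ : Measure ℝ) [IsFiniteMeasure μ],
      Antitone fun x : ℝ => (μ (Ici x)).toReal := by
    intro μ _ a b hab
    exact ENNReal.toReal_mono (measure_ne_top μ _) (measure_mono (Ici_subset_Ici.2 hab))
  exact ((mono _).measurable).sub ((mono _).measurable)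

lemma measurable_hFun (M : SignedMeasure ℝ) : Measurable (hFun M) := by
  unfold hFun
  refine Measurable.ite ?_ (measurable_Ici_apply M) ?_
  · exact measurableSet_lt measurable_const measurable_id
  · refine Measurable.ite ?_ ((measurable_Iic_apply M).neg) measurable_const
    exact measurableSet_lt measurable_id measurable_const

lemma hFun_le (M : SignedMeasure ℝ) (x : ℝ) :
    |hFun M x| ≤ max |M (Iic x)| |M (Ici x)| := by
  unfold hFun
  split_ifs with h1 h2
  · exact le_max_right _ _
  · rw [abs_neg]; exact le_max_left _ _
  · simp [abs_nonneg, le_max_iff, abs_nonneg]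

lemma intInt0 (t : ℝ) (ht : 0 < t) (m : ℝ) (hm : 0 ≤ m) :
    IntervalIntegrable (fun x : ℝ => t * |x| ^ (t - 1)) volume 0 m := by
  have h1 : IntervalIntegrable (fun x : ℝ => t * x ^ (t - 1)) volume 0 m :=
    (intervalIntegrable_rpow' (by linarith)).const_mul t
  rw [intervalIntegrable_iff_integrableOn_Ioc_of_le hm] at h1 ⊢
  refine h1.congr_fun ?_ measurableSet_Ioc
  intro x hx
  simp only [abs_of_pos hx.1]

lemma intIntNeg (t : ℝ) (ht : 0 < t) (m : ℝ) (hm : 0 ≤ m) :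
    IntervalIntegrable (fun x : ℝ => t * |x| ^ (t - 1)) volume (-m) 0 := by
  have := (IntervalIntegrable.iff_comp_neg).mp (intInt0 t ht m hm)
  simp only [abs_neg, neg_zero] at this
  exact this.symm

lemma intval (t : ℝ) (ht : 0 < t) (m : ℝ) (hm : 0 ≤ m) :
    ∫ x in (-m)..m, t * |x| ^ (t - 1) = 2 * m ^ t := by
  have key : ∫ x in (0:ℝ)..m, t * |x| ^ (t - 1) = m ^ t := by
    rw [intervalIntegral.integral_congr (g := fun x : ℝ => t * x ^ (t - 1)) ?_]
    · rw [intervalIntegral.integral_const_mul, integral_rpow (Or.inl (by linarith))]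
      rw [sub_add_cancel, Real.zero_rpow ht.ne']
      field_simp; simp
    · intro x hx
      rw [uIcc_of_le hm] at hx
      simp only [abs_of_nonneg hx.1]
  have neg : ∫ x in (-m)..(0:ℝ), t * |x| ^ (t - 1) = m ^ t := by
    have := intervalIntegral.integral_comp_neg (a := 0) (b := m)
      (f := fun x : ℝ => t * |x| ^ (t - 1))
    simp only [abs_neg, neg_zero] at this
    rw [← this, key]
  rw [← intervalIntegral.integral_add_adjacent_intervals (intIntNeg t ht m hm) (intInt0 t ht m hm),
    key, neg]
  ring

lemma lint_Icc (t : ℝ) (ht : 0 < t) (m : ℝ) (hm : 0 ≤ m) :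
    ∫⁻ x in Icc (-m) m, w t x = ENNReal.ofReal (2 * m ^ t) := by
  have hint : IntegrableOn (fun x : ℝ => t * |x| ^ (t - 1)) (Icc (-m) m) volume := by
    rw [← intervalIntegrable_iff_integrableOn_Icc_of_le (by linarith)]
    exact (intIntNeg t ht m hm).trans (intInt0 t ht m hm)
  have hnn : 0 ≤ᵐ[volume.restrict (Icc (-m) m)] fun x : ℝ => t * |x| ^ (t - 1) :=
    ae_of_all _ fun x => by positivity
  simp only [w]
  rw [← ofReal_integral_eq_lintegral_ofReal hint hnn]
  congr 1
  rw [integral_Icc_eq_integral_Ioc, ← intervalIntegral.integral_of_le (by linarith),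
    intval t ht m hm]

lemma ae_ne_zero : ∀ᵐ x : ℝ, x ≠ (0:ℝ) := by
  rw [ae_iff]
  simp only [ne_eq, not_not, Set.setOf_eq_eq_singleton]
  exact Real.volume_singleton

lemma set_bound {r s : ℝ} (h0 : 0 < r) (hrs : r < s) {A : Set ℝ} (hA : MeasurableSet A) :
    ∫⁻ x in A, w r x ≤ (2:ℝ≥0∞) ^ (1 - r/s) * (∫⁻ x in A, w s x) ^ (r/s) := by
  have hs : 0 < s := h0.trans hrs
  have hrs1 : 0 < r / s := div_pos h0 hs
  set v := ∫⁻ x in A, w s x with hv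
  rcases eq_top_or_lt_top v with hvt | hvlt
  · have : (2:ℝ≥0∞) ^ (1 - r/s) * v ^ (r/s) = ⊤ := by
      rw [hvt, ENNReal.top_rpow_of_pos hrs1,
        ENNReal.mul_top (ENNReal.rpow_pos (by norm_num) (by norm_num)).ne']
    rw [this]; exact le_top
  rcases eq_or_ne v 0 with hv0 | hvne
  · -- v = 0 : show LHS = 0
    have hws : ∀ᵐ x ∂volume.restrict A, w s x = 0 :=
      (lintegral_eq_zero_iff (measurable_w s)).mp hv0
    have hne : ∀ᵐ x ∂volume.restrict A, x ≠ (0:ℝ) := ae_restrict_of_ae ae_ne_zero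
    have : ∀ᵐ x ∂volume.restrict A, w r x = 0 := by
      filter_upwards [hws, hne] with x hx hxne
      exfalso
      rw [w, ENNReal.ofReal_eq_zero] at hx
      have : 0 < s * |x| ^ (s - 1) :=
        mul_pos hs (Real.rpow_pos_of_pos (abs_pos.mpr hxne) _)
      linarith
    rw [lintegral_eq_zero_iff (measurable_w r) |>.mpr this]
    exact zero_le
  -- main case
  have hvpos : 0 < v.toReal := ENNReal.toReal_pos hvne hvlt.ne
  set m : ℝ := (v.toReal / 2) ^ (1/s) with hmdef
  have hmpos : 0 < m := Real.rpow_pos_of_pos (by linarith) _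
  have hms : 2 * m ^ s = v.toReal := by
    rw [hmdef, ← Real.rpow_mul (by positivity), one_div_mul_cancel hs.ne', Real.rpow_one]
    field_simp
  set B : Set ℝ := Icc (-m) m with hBdef
  have hB : MeasurableSet B := measurableSet_Icc
  have hmuB_s : ∫⁻ x in B, w s x = v := by
    rw [hBdef, lint_Icc s hs m hmpos.le, hms, ENNReal.ofReal_toReal hvlt.ne]
  have hmuB_r : ∫⁻ x in B, w r x = ENNReal.ofReal (2 * m ^ r) :=
    lint_Icc r h0 m hmpos.le
  -- withDensity measures
  set μr : Measure ℝ := volume.withDensity (w r) with hμr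
  set μs : Measure ℝ := volume.withDensity (w s) with hμs
  have happr : ∀ (S : Set ℝ), MeasurableSet S → μr S = ∫⁻ x in S, w r x := fun S hS =>
    withDensity_apply _ hS
  have happs : ∀ (S : Set ℝ), MeasurableSet S → μs S = ∫⁻ x in S, w s x := fun S hS =>
    withDensity_apply _ hS
  set c : ℝ := (r / s) * m ^ (r - s) with hcdef
  have hcpos : 0 < c := mul_pos hrs1 (Real.rpow_pos_of_pos hmpos _)
  -- pointwise bounds
  have hptA : ∀ x : ℝ, x ∈ A \ B → w r x ≤ ENNReal.ofReal c * w s x := by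
    intro x hx
    have hxm : m < |x| := by
      have := hx.2
      simp only [hBdef, mem_Icc, not_and_or, not_le] at this
      rcases this with h | h
      · rw [abs_of_neg (by linarith)]; linarith
      · rw [abs_of_pos (by linarith)]; linarith
    have hreal : r * |x| ^ (r - 1) ≤ c * (s * |x| ^ (s - 1)) := by
      have h1 : |x| ^ (r - s) ≤ m ^ (r - s) :=
        Real.rpow_le_rpow_of_nonpos hmpos hxm.le (by linarith)
      have hxx : |x| ^ (r - s) * |x| ^ (s - 1) = |x| ^ (r - 1) := by
        rw [← Real.rpow_add (lt_trans hmpos hxm)]; norm_num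
      have h2 : r * |x| ^ (r - 1) = (r / s) * |x| ^ (r - s) * (s * |x| ^ (s - 1)) := by
        rw [← hxx]; field_simp
      rw [h2, hcdef]
      have h3 : 0 ≤ s * |x| ^ (s - 1) := by positivity
      have h4 : (r / s) * |x| ^ (r - s) ≤ (r / s) * m ^ (r - s) :=
        mul_le_mul_of_nonneg_left h1 hrs1.le
      exact mul_le_mul_of_nonneg_right h4 h3
    calc w r x ≤ ENNReal.ofReal (c * (s * |x| ^ (s - 1))) := ENNReal.ofReal_le_ofReal hreal
      _ = ENNReal.ofReal c * w s x := by rw [ENNReal.ofReal_mul hcpos.le, w]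
  have hptB : ∀ x : ℝ, x ≠ 0 → x ∈ B \ A → ENNReal.ofReal c * w s x ≤ w r x := by
    intro x hxne hx
    have hxpos : 0 < |x| := abs_pos.mpr hxne
    have hxm : |x| ≤ m := abs_le.mpr ⟨hx.1.1, hx.1.2⟩
    have hreal : c * (s * |x| ^ (s - 1)) ≤ r * |x| ^ (r - 1) := by
      have h1 : m ^ (r - s) ≤ |x| ^ (r - s) :=
        Real.rpow_le_rpow_of_nonpos hxpos hxm (by linarith)
      have hxx : |x| ^ (r - s) * |x| ^ (s - 1) = |x| ^ (r - 1) := by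
        rw [← Real.rpow_add hxpos]; norm_num
      have h2 : r * |x| ^ (r - 1) = (r / s) * |x| ^ (r - s) * (s * |x| ^ (s - 1)) := by
        rw [← hxx]; field_simp
      rw [h2, hcdef]
      have h3 : 0 ≤ s * |x| ^ (s - 1) := by positivity
      exact mul_le_mul_of_nonneg_right (mul_le_mul_of_nonneg_left h1 hrs1.le) h3
    calc ENNReal.ofReal c * w s x = ENNReal.ofReal (c * (s * |x| ^ (s - 1))) := by
          rw [ENNReal.ofReal_mul hcpos.le, w]
      _ ≤ w r x := ENNReal.ofReal_le_ofReal hreal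
  -- measure comparisons
  have key1 : μr (A \ B) ≤ ENNReal.ofReal c * μs (A \ B) := by
    rw [happr _ (hA.diff hB), happs _ (hA.diff hB), ← lintegral_const_mul _ (measurable_w s)]
    exact setLIntegral_mono ((measurable_w s).const_mul _) hptA
  have key2 : ENNReal.ofReal c * μs (B \ A) ≤ μr (B \ A) := by
    rw [happr _ (hB.diff hA), happs _ (hB.diff hA), ← lintegral_const_mul _ (measurable_w s)]
    refine setLIntegral_mono_ae' (hB.diff hA) ?_
    filter_upwards [ae_ne_zero] with x hxne hx
    exact hptB x hxne hx
  have hfinAB : μs (A ∩ B) ≠ ⊤ := by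
    refine ne_top_of_le_ne_top hvlt.ne ?_
    rw [happs _ (hA.inter hB), hv]
    exact lintegral_mono_set inter_subset_left
  have key3 : μs (A \ B) = μs (B \ A) := by
    have e1 : μs (A ∩ B) + μs (A \ B) = v := by
      rw [measure_inter_add_diff A hB, happs _ hA]
    have e2 : μs (A ∩ B) + μs (B \ A) = v := by
      rw [inter_comm, measure_inter_add_diff B hA, happs _ hB, hmuB_s]
    rw [← e2] at e1
    exact (ENNReal.add_right_inj hfinAB).mp e1
  -- combine
  have main : μr A ≤ ENNReal.ofReal (2 * m ^ r) := by
    calc μr A = μr (A ∩ B) + μr (A \ B) := (measure_inter_add_diff A hB).symm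
      _ ≤ μr (A ∩ B) + ENNReal.ofReal c * μs (A \ B) := by gcongr
      _ = μr (A ∩ B) + ENNReal.ofReal c * μs (B \ A) := by rw [key3]
      _ ≤ μr (A ∩ B) + μr (B \ A) := by gcongr
      _ = μr B := by rw [inter_comm, measure_inter_add_diff B hA]
      _ = ENNReal.ofReal (2 * m ^ r) := by rw [happr _ hB, hmuB_r]
  rw [← happr _ hA] at *
  refine le_trans main (le_of_eq ?_)
  -- ofReal (2 * m ^ r) = 2 ^ (1 - r/s) * v ^ (r/s)
  have hvval : v = ENNReal.ofReal (2 * m ^ s) := by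
    rw [hms, ENNReal.ofReal_toReal hvlt.ne]
  rw [hvval, ENNReal.ofReal_rpow_of_pos (by positivity),
    show (2:ℝ≥0∞) = ENNReal.ofReal 2 by norm_num,
    ENNReal.ofReal_rpow_of_pos (by norm_num), ← ENNReal.ofReal_mul (by positivity)]
  congr 1
  rw [Real.mul_rpow (by norm_num) (by positivity), ← Real.rpow_mul hmpos.le,
    mul_div_cancel₀ _ hs.ne', ← mul_assoc, ← Real.rpow_add (by norm_num)]
  norm_num

lemma kappa_eq (t : ℝ) (ht : 0 < t) (M : SignedMeasure ℝ) :
    kappa t M = ∫⁻ x, ENNReal.ofReal |hFun M x| ∂(volume.withDensity (w t)) := by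
  rw [lintegral_withDensity_eq_lintegral_mul _ (measurable_w t)
    (g := fun x => ENNReal.ofReal |hFun M x|) ((measurable_hFun M).abs.ennreal_ofReal)]
  simp only [kappa, Pi.mul_apply, w]
  congr 1
  ext x
  rw [← ENNReal.ofReal_mul (by positivity)]

lemma kappa_zero_of (r t : ℝ) (hr : 0 < r) (ht : 0 < t) (M : SignedMeasure ℝ)
    (h : kappa t M = 0) : kappa r M = 0 := by
  have hmeas : ∀ u : ℝ, Measurable fun x : ℝ => ENNReal.ofReal (u * |x| ^ (u - 1) * |hFun M x|) :=
    fun u => ENNReal.measurable_ofReal.comp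
      ((measurable_const.mul (measurable_id.abs.pow measurable_const)).mul (measurable_hFun M).abs)
  rw [kappa, lintegral_eq_zero_iff (hmeas t)] at h
  rw [kappa, lintegral_eq_zero_iff (hmeas r)]
  filter_upwards [h, ae_ne_zero] with x hx hxne
  simp only [Pi.zero_apply, ENNReal.ofReal_eq_zero] at hx ⊢
  have hpos : 0 < t * |x| ^ (t - 1) :=
    mul_pos ht (Real.rpow_pos_of_pos (abs_pos.mpr hxne) _)
  have habs : |hFun M x| = 0 := by
    rcases mul_nonneg (le_of_lt hpos) (abs_nonneg (hFun M x)) |>.lt_or_eq with hlt | heq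
    · exfalso; exact absurd hx (not_le.mpr hlt)
    · have := heq.symm
      rcases mul_eq_zero.mp this with h1 | h2
      · exact absurd h1 hpos.ne'
      · exact h2
  rw [habs, mul_zero]


end Aux6

open Aux6 in
/-- For `0 < r < s < ∞` and a bounded signed measure `M` on `ℝ`:
`κ_r(M) ≤ 2^{1−r/s} ‖M‖_K^{1−r/s} κ_s(M)^{r/s}`. -/
theorem stmt6 (r s : ℝ) (h0 : 0 < r) (hrs : r < s) (M : SignedMeasure ℝ) :
    kappa r M ≤ (2 : ℝ≥0∞) ^ (1 - r / s) * kolNorm M ^ (1 - r / s) * kappa s M ^ (r / s) := by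
  have hs : 0 < s := h0.trans hrs
  have hrs1 : 0 < r / s := div_pos h0 hs
  have hrslt : r / s < 1 := (div_lt_one hs).mpr hrs
  have hc : 0 < 1 - r / s := by linarith
  by_cases hks : kappa s M = 0
  · rw [kappa_zero_of r s h0 hs M hks]
    exact zero_le
  have hkne : kappa s M ^ (r / s) ≠ 0 := by
    rw [Ne, ENNReal.rpow_eq_zero_iff]
    rintro (⟨h1, _⟩ | ⟨_, h2⟩)
    · exact hks h1
    · linarith
  by_cases hK : kolNorm M = ⊤
  · rw [hK, ENNReal.top_rpow_of_pos hc,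
      ENNReal.mul_top (ENNReal.rpow_pos (by norm_num) (by norm_num)).ne',
      ENNReal.top_mul hkne]
    exact le_top
  -- main case: kolNorm M < ⊤
  set f : ℝ → ℝ := fun x => |hFun M x| with hfdef
  have mf : Measurable f := (measurable_hFun M).abs
  set K' : ℝ := (kolNorm M).toReal with hK'def
  have hK'nn : 0 ≤ K' := ENNReal.toReal_nonneg
  have hofK' : ENNReal.ofReal K' = kolNorm M := ENNReal.ofReal_toReal hK
  have hfK : ∀ x, f x ≤ K' := by
    intro x
    have h1 : ENNReal.ofReal (f x) ≤ kolNorm M := by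
      refine le_trans (ENNReal.ofReal_le_ofReal (hFun_le M x)) ?_
      rw [kolNorm]
      exact le_iSup (fun y => ENNReal.ofReal (max |M (Iic y)| |M (Ici y)|)) x
    calc f x = (ENNReal.ofReal (f x)).toReal := (ENNReal.toReal_ofReal (abs_nonneg _)).symm
      _ ≤ K' := ENNReal.toReal_mono hK h1
  set μr := volume.withDensity (w r) with hμr
  set μs := volume.withDensity (w s) with hμs
  have layr : kappa r M = ∫⁻ t in Ioi (0:ℝ), μr {x | t < f x} :=
    (kappa_eq r h0 M).trans
      (lintegral_eq_lintegral_meas_lt μr (ae_of_all _ fun x => abs_nonneg _) mf.aemeasurable)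
  have lays : kappa s M = ∫⁻ t in Ioi (0:ℝ), μs {x | t < f x} :=
    (kappa_eq s hs M).trans
      (lintegral_eq_lintegral_meas_lt μs (ae_of_all _ fun x => abs_nonneg _) mf.aemeasurable)
  have hsetm : ∀ t : ℝ, MeasurableSet {x : ℝ | t < f x} := fun t =>
    measurableSet_lt measurable_const mf
  -- restrict the r-integral to Ioc 0 K'
  have hsplit : (∫⁻ t in Ioi (0:ℝ), μr {x | t < f x})
      = ∫⁻ t in Ioc (0:ℝ) K', μr {x | t < f x} := by
    rw [← Ioc_union_Ioi_eq_Ioi hK'nn,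
      lintegral_union measurableSet_Ioi Ioc_disjoint_Ioi_same]
    have hzero : ∫⁻ t in Ioi K', μr {x | t < f x} = 0 := by
      rw [setLIntegral_congr_fun_ae measurableSet_Ioi
        (ae_of_all _ (fun t (ht : t ∈ Ioi K') => ?_)), lintegral_zero]
      have : {x : ℝ | t < f x} = ∅ := by
        ext x
        simp only [mem_setOf_eq, mem_empty_iff_false, iff_false, not_lt]
        exact (hfK x).trans (le_of_lt ht)
      rw [this]
      exact measure_empty
    rw [hzero, add_zero]
  -- the antitone distribution function for s
  set lam : ℝ → ℝ≥0∞ := fun t => μs {x | t < f x} with hlam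
  have hlam_anti : Antitone lam := by
    intro a b hab
    exact measure_mono fun x hx => lt_of_le_of_lt hab hx
  have hlam_meas : Measurable lam := hlam_anti.measurable
  -- step 1 : pointwise set bound
  have step1 : (∫⁻ t in Ioc (0:ℝ) K', μr {x | t < f x})
      ≤ ∫⁻ t in Ioc (0:ℝ) K', (2:ℝ≥0∞) ^ (1 - r/s) * lam t ^ (r/s) := by
    refine lintegral_mono fun t => ?_
    calc μr {x | t < f x} = ∫⁻ a in {x | t < f x}, w r a := withDensity_apply _ (hsetm t)
      _ ≤ (2:ℝ≥0∞) ^ (1 - r/s) * (∫⁻ a in {x | t < f x}, w s a) ^ (r/s) :=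
          set_bound h0 hrs (hsetm t)
      _ = (2:ℝ≥0∞) ^ (1 - r/s) * lam t ^ (r/s) := by
          rw [show (∫⁻ a in {x | t < f x}, w s a) = lam t from
            (withDensity_apply _ (hsetm t)).symm]
  -- step 2 : Hölder
  have hpq : Real.HolderConjugate (s / r) (s / (s - r)) := by
    rw [Real.holderConjugate_iff]
    constructor
    · exact (one_lt_div h0).mpr hrs
    · rw [inv_div, inv_div, ← add_div]
      field_simp; ring
  have step2 : (∫⁻ t in Ioc (0:ℝ) K', lam t ^ (r/s))
      ≤ (∫⁻ t in Ioc (0:ℝ) K', lam t) ^ (r/s) * (kolNorm M) ^ (1 - r/s) := by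
    have hold := ENNReal.lintegral_mul_le_Lp_mul_Lq (volume.restrict (Ioc (0:ℝ) K')) hpq
      (f := fun t => lam t ^ (r/s)) (g := fun _ => 1)
      ((hlam_meas.pow measurable_const).aemeasurable) aemeasurable_const
    simp only [Pi.mul_apply, mul_one] at hold
    have e1 : ∀ t : ℝ, (lam t ^ (r/s)) ^ (s/r) = lam t := by
      intro t
      rw [← ENNReal.rpow_mul, show (r/s)*(s/r) = 1 by field_simp, ENNReal.rpow_one]
    have e2 : (1:ℝ)/(s/r) = r/s := one_div_div s r
    have e3 : (1:ℝ)/(s/(s-r)) = 1 - r/s := by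
      rw [one_div_div]
      field_simp
    simp only [e1, ENNReal.one_rpow, lintegral_one, Measure.restrict_apply, MeasurableSet.univ,
      univ_inter, e2, e3] at hold
    rwa [Real.volume_Ioc, sub_zero, hofK'] at hold
  -- combine
  rw [layr, hsplit]
  have hlam_le : (∫⁻ t in Ioc (0:ℝ) K', lam t) ≤ kappa s M := by
    rw [lays]
    exact lintegral_mono_set Ioc_subset_Ioi_self
  calc (∫⁻ t in Ioc (0:ℝ) K', μr {x | t < f x})
      ≤ ∫⁻ t in Ioc (0:ℝ) K', (2:ℝ≥0∞) ^ (1 - r/s) * lam t ^ (r/s) := step1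
    _ = (2:ℝ≥0∞) ^ (1 - r/s) * ∫⁻ t in Ioc (0:ℝ) K', lam t ^ (r/s) :=
        lintegral_const_mul _ (hlam_meas.pow measurable_const)
    _ ≤ (2:ℝ≥0∞) ^ (1 - r/s) * ((∫⁻ t in Ioc (0:ℝ) K', lam t) ^ (r/s) * (kolNorm M) ^ (1 - r/s)) :=
        mul_le_mul_right step2 _
    _ ≤ (2:ℝ≥0∞) ^ (1 - r/s) * ((kappa s M) ^ (r/s) * (kolNorm M) ^ (1 - r/s)) := by
        gcongr
    _ = (2:ℝ≥0∞) ^ (1 - r / s) * kolNorm M ^ (1 - r / s) * kappa s M ^ (r / s) := by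
        ring
end

section
/- Let P be a probability measure on ℝ with finite second moment, −∞ ≤ a ≤ b ≤ ∞, and let Q be the winsorisation of P: Q = P(· ∩ (a,b)) + P((−∞,a])·δ_a + P([b,∞))·δ_b. Then either σ²(Q) < σ²(P), or Q = P, or σ²(P) = 0. -/
open MeasureTheory Set
open scoped ENNReal

/-- Variance of a measure on `ℝ`. -/
noncomputable def varM (μ : MeasureTheory.Measure ℝ) : ℝ :=
  (∫ x, x ^ 2 ∂μ) - (∫ x, x ∂μ) ^ 2

section helpers
variable {P : Measure ℝ} [IsProbabilityMeasure P]

lemma integrable_id' (h2 : Integrable (fun x => x ^ 2) P) :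
    Integrable (fun x : ℝ => x) P := by
  have hb : Integrable (fun x : ℝ => x ^ 2 + 1) P := h2.add (integrable_const 1)
  refine hb.mono' aestronglyMeasurable_id ?_
  filter_upwards with x
  rw [Real.norm_eq_abs]
  nlinarith [abs_nonneg x, sq_abs x, sq_nonneg (|x| - 1)]

lemma int_sub_sq_integrable
    (g : ℝ → ℝ) (hg2 : Integrable (fun x => g x ^ 2) P) (hg : Integrable g P) (c : ℝ) :
    Integrable (fun x => (g x - c) ^ 2) P := by
  have h1 : Integrable (fun x : ℝ => g x ^ 2 - (2*c) * g x) P := hg2.sub (hg.const_mul _)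
  have : (fun x => (g x - c) ^ 2) = fun x => (g x ^ 2 - (2*c) * g x) + c ^ 2 := by
    funext x; ring
  rw [this]
  exact h1.add (integrable_const _)

lemma int_shift (h2 : Integrable (fun x => x ^ 2) P) (c : ℝ) :
    ∫ x, (x - c) ^ 2 ∂P = varM P + ((∫ x, x ∂P) - c) ^ 2 := by
  have hx := integrable_id' h2
  have hcm : Integrable (fun x : ℝ => (2*c) * x) P := hx.const_mul _
  have h1 : (fun x : ℝ => (x - c) ^ 2) = fun x => (x ^ 2 - (2*c) * x) + c ^ 2 := by
    funext x; ring
  have hsub : Integrable (fun x : ℝ => x ^ 2 - (2*c) * x) P := h2.sub hcm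
  rw [h1, integral_add hsub (integrable_const _),
    integral_sub h2 hcm, integral_const_mul, integral_const]
  simp only [probReal_univ, ENNReal.toReal_one, one_smul, varM, smul_eq_mul]
  ring

lemma varM_nonneg (h2 : Integrable (fun x => x ^ 2) P) : 0 ≤ varM P := by
  have h := int_shift h2 (∫ x, x ∂P)
  simp only [sub_self, ne_eq, OfNat.ofNat_ne_zero, not_false_eq_true, zero_pow, add_zero] at h
  rw [← h]
  exact integral_nonneg (fun x => sq_nonneg _)

lemma core_lemma (h2 : Integrable (fun x => x ^ 2) P)
    (f : ℝ → ℝ) (hf : Measurable f)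
    (hL : ∀ x y, |f x - f y| ≤ |x - y|)
    (hS : ∀ x y, f x ≠ x → x ≠ y → |f x - f y| < |x - y|) :
    varM (P.map f) < varM P ∨ P.map f = P ∨ varM P = 0 := by
  by_cases hvP : varM P = 0
  · exact Or.inr (Or.inr hvP)
  by_cases hA : P {x | f x ≠ x} = 0
  · refine Or.inr (Or.inl ?_)
    have hae : f =ᵐ[P] id := by
      rw [Filter.EventuallyEq, ae_iff]
      exact hA
    rw [Measure.map_congr hae, Measure.map_id]
  · left
    have hx : Integrable (fun x : ℝ => x) P := integrable_id' h2
    have hfb : ∀ x, |f x| ≤ |f 0| + |x| := by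
      intro x
      have h1 := hL x 0
      have h2' : |f x| ≤ |f x - f 0| + |f 0| := by
        have := abs_add_le (f x - f 0) (f 0); simpa using this
      have h3 : |x - 0| = |x| := by simp
      linarith [h1, h2', h3.symm ▸ h1]
    have hfasm : AEStronglyMeasurable f P := hf.aestronglyMeasurable
    have hfi : Integrable f P := by
      have hbi : Integrable (fun x : ℝ => |f 0| + |x|) P := (integrable_const _).add hx.abs
      refine hbi.mono' hfasm ?_
      filter_upwards with x
      rw [Real.norm_eq_abs]; exact hfb x
    have hf2 : Integrable (fun x => f x ^ 2) P := by
      have hb1 : Integrable (fun x : ℝ => f 0 ^ 2 + (2 * |f 0|) * |x|) P :=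
        (integrable_const _).add (hx.abs.const_mul _)
      have hbi : Integrable (fun x : ℝ => (f 0 ^ 2 + (2 * |f 0|) * |x|) + x ^ 2) P :=
        hb1.add h2
      refine hbi.mono' ((hf.pow_const 2).aestronglyMeasurable) ?_
      filter_upwards with x
      rw [Real.norm_eq_abs, abs_of_nonneg (sq_nonneg (f x))]
      nlinarith [hfb x, abs_nonneg (f x), abs_nonneg x, abs_nonneg (f 0), sq_abs (f x),
        sq_abs x, sq_abs (f 0), mul_self_le_mul_self (abs_nonneg (f x)) (hfb x)]
    set m := ∫ x, x ∂P with hm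
    set μf := ∫ x, f x ∂P with hmf
    have hQprob : IsProbabilityMeasure (P.map f) := Measure.isProbabilityMeasure_map hf.aemeasurable
    have hsqasm : AEStronglyMeasurable (fun y : ℝ => y ^ 2) (P.map f) :=
      (continuous_pow 2).aestronglyMeasurable
    have hidasm : AEStronglyMeasurable (fun y : ℝ => y) (P.map f) :=
      continuous_id.aestronglyMeasurable
    have hQ2 : Integrable (fun y => y ^ 2) (P.map f) := by
      rw [integrable_map_measure hsqasm hf.aemeasurable]
      exact hf2
    have hmapid : ∫ y, y ∂(P.map f) = μf := integral_map hf.aemeasurable hidasm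
    have hshiftP : ∫ x, (x - m) ^ 2 ∂P = varM P := by
      have h := int_shift h2 m
      simpa [← hm] using h
    have hshiftQ : ∫ x, (f x - f m) ^ 2 ∂P = varM (P.map f) + (μf - f m) ^ 2 := by
      have h := int_shift (P := P.map f) hQ2 (f m)
      rw [hmapid] at h
      have h4 : ∫ y, (y - f m) ^ 2 ∂(P.map f) = ∫ x, (f x - f m) ^ 2 ∂P :=
        integral_map hf.aemeasurable
          (((continuous_id.sub continuous_const).pow 2).aestronglyMeasurable)
      rw [h4] at h
      exact h
    set g := fun x : ℝ => (x - m) ^ 2 - (f x - f m) ^ 2 with hg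
    have hgi1 : Integrable (fun x : ℝ => (x - m) ^ 2) P :=
      int_sub_sq_integrable (fun x => x) h2 hx m
    have hgi2 : Integrable (fun x : ℝ => (f x - f m) ^ 2) P :=
      int_sub_sq_integrable f hf2 hfi (f m)
    have hgint : Integrable g P := hgi1.sub hgi2
    have hg0 : ∀ x, 0 ≤ g x := by
      intro x
      have h1 := hL x m
      have h3 : |f x - f m| ^ 2 ≤ |x - m| ^ 2 := pow_le_pow_left₀ (abs_nonneg _) h1 2
      rw [sq_abs, sq_abs] at h3
      simpa [hg] using sub_nonneg.mpr h3
    have hkey : varM P - varM (P.map f) = (∫ x, g x ∂P) + (μf - f m) ^ 2 := by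
      have h5 : ∫ x, g x ∂P
          = (∫ x, (x - m) ^ 2 ∂P) - ∫ x, (f x - f m) ^ 2 ∂P := integral_sub hgi1 hgi2
      rw [h5, hshiftP, hshiftQ]
      ring
    by_cases hAm : P ({x | f x ≠ x} \ {m}) = 0
    · have hmem : f m ≠ m := by
        intro hfm
        apply hA
        refine measure_mono_null ?_ hAm
        intro x hxA
        refine ⟨hxA, ?_⟩
        intro hxm
        rw [Set.mem_singleton_iff] at hxm
        exact hxA (hxm ▸ hfm)
      have hae2 : f =ᵐ[P] fun x => if x = m then f m else x := by
        rw [Filter.EventuallyEq, ae_iff]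
        refine measure_mono_null ?_ hAm
        intro x hxbad
        simp only [Set.mem_setOf_eq] at hxbad
        by_cases hxm : x = m
        · exfalso; apply hxbad; rw [if_pos hxm, hxm]
        · rw [if_neg hxm] at hxbad
          exact ⟨hxbad, hxm⟩
      have hμf : μf = m + (f m - m) * (P {m}).toReal := by
        have h6 : μf = ∫ x, (if x = m then f m else x) ∂P := integral_congr_ae hae2
        have h7 : (fun x : ℝ => if x = m then f m else x)
            = fun x => x + Set.indicator {m} (fun _ => f m - m) x := by
          funext x
          by_cases hxm : x = m <;> simp [Set.indicator, hxm]
        have hind : Integrable (Set.indicator {m} (fun _ : ℝ => f m - m)) P :=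
          (integrable_const _).indicator (measurableSet_singleton m)
        rw [h6, h7, integral_add hx hind, integral_indicator_const _ (measurableSet_singleton m)]
        simp [hm, smul_eq_mul]
        simp only [measureReal_def]
        ring
      have hp1 : (P {m}).toReal < 1 := by
        rcases lt_or_eq_of_le (prob_le_one (μ := P) (s := {m})) with h | heq1
        · have h10 := (ENNReal.toReal_lt_toReal (measure_ne_top P {m}) ENNReal.one_ne_top).mpr h
          simpa using h10
        · exfalso
          have haem : ∀ᵐ x ∂P, x = m := by
            rw [ae_iff]
            have hcz : P {m}ᶜ = 0 := by
              rw [measure_compl (measurableSet_singleton m) (measure_ne_top _ _),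
                measure_univ, heq1, tsub_self]
            have hset : {x : ℝ | ¬ x = m} = ({m}ᶜ : Set ℝ) := by ext y; simp
            rw [hset]
            exact hcz
          apply hvP
          have hx2 : ∫ x, x ^ 2 ∂P = m ^ 2 := by
            have h11 : (fun x : ℝ => x ^ 2) =ᵐ[P] fun _ => m ^ 2 := by
              filter_upwards [haem] with x hx3
              rw [hx3]
            rw [integral_congr_ae h11, integral_const]
            simp
          rw [varM, hx2, ← hm]
          ring
      have hc : μf - f m ≠ 0 := by
        rw [hμf]
        have : m + (f m - m) * (P {m}).toReal - f m = (m - f m) * (1 - (P {m}).toReal) := by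
          ring
        rw [this]
        apply mul_ne_zero
        · exact sub_ne_zero.mpr (Ne.symm hmem)
        · exact ne_of_gt (by linarith)
      have hIg : 0 ≤ ∫ x, g x ∂P := integral_nonneg hg0
      have hc2 : 0 < (μf - f m) ^ 2 := by positivity
      linarith [hkey]
    · have hpos : 0 < ∫ x, g x ∂P := by
        refine (integral_pos_iff_support_of_nonneg hg0 hgint).2 ?_
        refine lt_of_lt_of_le (b := P ({x | f x ≠ x} \ {m})) ?_ (measure_mono ?_)
        · exact lt_of_le_of_ne zero_le (Ne.symm hAm)
        · intro x hx4
          obtain ⟨hx5, hx6⟩ := hx4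
          simp only [Set.mem_setOf_eq] at hx5
          have hx7 : x ≠ m := by
            intro hxe; exact hx6 (by simp [hxe])
          have h8 := hS x m hx5 hx7
          have h9 : |f x - f m| ^ 2 < |x - m| ^ 2 :=
            pow_lt_pow_left₀ h8 (abs_nonneg _) (by norm_num)
          rw [sq_abs, sq_abs] at h9
          have : 0 < g x := sub_pos.mpr h9
          exact Function.mem_support.mpr this.ne'
      have hc2 : 0 ≤ (μf - f m) ^ 2 := sq_nonneg _
      linarith [hkey]

end helpers

section wins
open Classical in
noncomputable def wins (a b : EReal) (x : ℝ) : ℝ :=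
  if (x : EReal) ≤ a then a.toReal else if b ≤ (x : EReal) then b.toReal else x

variable {a b : EReal} {x : ℝ}

lemma wins_low (h : (x : EReal) ≤ a) : wins a b x = a.toReal := by
  rw [wins, if_pos h]

lemma wins_high (hab : a < b) (h : b ≤ (x : EReal)) : wins a b x = b.toReal := by
  rw [wins, if_neg (fun h' => hab.not_ge (h.trans h')), if_pos h]

lemma wins_mid (h1 : a < (x : EReal)) (h2 : (x : EReal) < b) : wins a b x = x := by
  rw [wins, if_neg (not_le.mpr h1), if_neg (not_le.mpr h2)]

lemma wins_measurable : Measurable (wins a b) := by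
  have hc : Measurable ((↑) : ℝ → EReal) := continuous_coe_real_ereal.measurable
  have h1 : MeasurableSet {x : ℝ | (x : EReal) ≤ a} := hc measurableSet_Iic
  have h2 : MeasurableSet {x : ℝ | b ≤ (x : EReal)} := hc measurableSet_Ici
  exact Measurable.ite h1 measurable_const (Measurable.ite h2 measurable_const measurable_id)

lemma wins_cases (hab : a < b) (x : ℝ) :
    ((x : EReal) ≤ a ∧ wins a b x = a.toReal ∧ x ≤ a.toReal ∧ (a.toReal : EReal) = a)
    ∨ (a < (x : EReal) ∧ (x : EReal) < b ∧ wins a b x = x)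
    ∨ (b ≤ (x : EReal) ∧ wins a b x = b.toReal ∧ b.toReal ≤ x ∧ (b.toReal : EReal) = b) := by
  rcases le_or_gt (x : EReal) a with h | h
  · left
    have hbot : a ≠ ⊥ := fun ha => absurd (le_bot_iff.mp (ha ▸ h)) (EReal.coe_ne_bot x)
    have htop : a ≠ ⊤ := hab.ne_top
    have hco : (a.toReal : EReal) = a := EReal.coe_toReal htop hbot
    refine ⟨h, wins_low h, ?_, hco⟩
    rw [← EReal.coe_le_coe_iff, hco]; exact h
  · rcases lt_or_ge (x : EReal) b with h2 | h2
    · exact Or.inr (Or.inl ⟨h, h2, wins_mid h h2⟩)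
    · right; right
      have htop : b ≠ ⊤ := fun hb => absurd (top_le_iff.mp (hb ▸ h2)) (EReal.coe_ne_top x)
      have hbot : b ≠ ⊥ := hab.ne_bot
      have hco : (b.toReal : EReal) = b := EReal.coe_toReal htop hbot
      refine ⟨h2, wins_high hab h2, ?_, hco⟩
      rw [← EReal.coe_le_coe_iff, hco]; exact h2

lemma wins_lip (hab : a < b) (x y : ℝ) : |wins a b x - wins a b y| ≤ |x - y| := by
  rcases wins_cases hab x with ⟨hx1, hx2, hx3, hxc⟩ | ⟨hx1, hx2, hx3⟩ | ⟨hx1, hx2, hx3, hxc⟩ <;>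
    rcases wins_cases hab y with ⟨hy1, hy2, hy3, hyc⟩ | ⟨hy1, hy2, hy3⟩ | ⟨hy1, hy2, hy3, hyc⟩
  -- low low
  · rw [hx2, hy2]; simp [abs_nonneg]
  -- low mid
  · rw [hx2, hy3]
    have : a.toReal < y := by rw [← EReal.coe_lt_coe_iff, hxc]; exact hy1
    rcases abs_cases (a.toReal - y) with ⟨he, _⟩ | ⟨he, _⟩ <;>
      rcases abs_cases (x - y) with ⟨he2, _⟩ | ⟨he2, _⟩ <;> linarith
  -- low high
  · rw [hx2, hy2]
    have : a.toReal < b.toReal := by rw [← EReal.coe_lt_coe_iff, hxc, hyc]; exact hab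
    rcases abs_cases (a.toReal - b.toReal) with ⟨he, _⟩ | ⟨he, _⟩ <;>
      rcases abs_cases (x - y) with ⟨he2, _⟩ | ⟨he2, _⟩ <;> linarith
  -- mid low
  · rw [hx3, hy2]
    have : a.toReal < x := by rw [← EReal.coe_lt_coe_iff, hyc]; exact hx1
    rcases abs_cases (x - a.toReal) with ⟨he, _⟩ | ⟨he, _⟩ <;>
      rcases abs_cases (x - y) with ⟨he2, _⟩ | ⟨he2, _⟩ <;> linarith
  -- mid mid
  · rw [hx3, hy3]
  -- mid high
  · rw [hx3, hy2]
    have : x < b.toReal := by rw [← EReal.coe_lt_coe_iff, hyc]; exact hx2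
    rcases abs_cases (x - b.toReal) with ⟨he, _⟩ | ⟨he, _⟩ <;>
      rcases abs_cases (x - y) with ⟨he2, _⟩ | ⟨he2, _⟩ <;> linarith
  -- high low
  · rw [hx2, hy2]
    have : a.toReal < b.toReal := by rw [← EReal.coe_lt_coe_iff, hxc, hyc]; exact hab
    rcases abs_cases (b.toReal - a.toReal) with ⟨he, _⟩ | ⟨he, _⟩ <;>
      rcases abs_cases (x - y) with ⟨he2, _⟩ | ⟨he2, _⟩ <;> linarith
  -- high mid
  · rw [hx2, hy3]
    have : y < b.toReal := by rw [← EReal.coe_lt_coe_iff, hxc]; exact hy2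
    rcases abs_cases (b.toReal - y) with ⟨he, _⟩ | ⟨he, _⟩ <;>
      rcases abs_cases (x - y) with ⟨he2, _⟩ | ⟨he2, _⟩ <;> linarith
  -- high high
  · rw [hx2, hy2]; simp [abs_nonneg]

lemma wins_strict (hab : a < b) (x y : ℝ) (hfx : wins a b x ≠ x) (hxy : x ≠ y) :
    |wins a b x - wins a b y| < |x - y| := by
  have hxy' : 0 < |x - y| := abs_pos.mpr (sub_ne_zero.mpr hxy)
  rcases wins_cases hab x with ⟨hx1, hx2, hx3, hxc⟩ | ⟨hx1, hx2, hx3⟩ | ⟨hx1, hx2, hx3, hxc⟩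
  · -- low : x < a.toReal strictly
    have hxlt : x < a.toReal := lt_of_le_of_ne hx3 (fun he => hfx (hx2.trans he.symm))
    rcases wins_cases hab y with ⟨hy1, hy2, hy3, hyc⟩ | ⟨hy1, hy2, hy3⟩ | ⟨hy1, hy2, hy3, hyc⟩
    · rw [hx2, hy2]; simpa using hxy'
    · rw [hx2, hy3]
      have : a.toReal < y := by rw [← EReal.coe_lt_coe_iff, hxc]; exact hy1
      rcases abs_cases (a.toReal - y) with ⟨he, _⟩ | ⟨he, _⟩ <;>
        rcases abs_cases (x - y) with ⟨he2, _⟩ | ⟨he2, _⟩ <;> linarith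
    · rw [hx2, hy2]
      have : a.toReal < b.toReal := by rw [← EReal.coe_lt_coe_iff, hxc, hyc]; exact hab
      rcases abs_cases (a.toReal - b.toReal) with ⟨he, _⟩ | ⟨he, _⟩ <;>
        rcases abs_cases (x - y) with ⟨he2, _⟩ | ⟨he2, _⟩ <;> linarith
  · exact absurd hx3 hfx
  · -- high : b.toReal < x strictly
    have hxlt : b.toReal < x := lt_of_le_of_ne hx3 (fun he => hfx (hx2.trans he))
    rcases wins_cases hab y with ⟨hy1, hy2, hy3, hyc⟩ | ⟨hy1, hy2, hy3⟩ | ⟨hy1, hy2, hy3, hyc⟩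
    · rw [hx2, hy2]
      have : a.toReal < b.toReal := by rw [← EReal.coe_lt_coe_iff, hxc, hyc]; exact hab
      rcases abs_cases (b.toReal - a.toReal) with ⟨he, _⟩ | ⟨he, _⟩ <;>
        rcases abs_cases (x - y) with ⟨he2, _⟩ | ⟨he2, _⟩ <;> linarith
    · rw [hx2, hy3]
      have : y < b.toReal := by rw [← EReal.coe_lt_coe_iff, hxc]; exact hy2
      rcases abs_cases (b.toReal - y) with ⟨he, _⟩ | ⟨he, _⟩ <;>
        rcases abs_cases (x - y) with ⟨he2, _⟩ | ⟨he2, _⟩ <;> linarith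
    · rw [hx2, hy2]; simpa using hxy'

end wins

/-- Let `P` be a probability measure on `ℝ` with finite second moment,
`−∞ ≤ a ≤ b ≤ ∞`, and `Q = P(· ∩ (a,b)) + P((−∞,a])·δ_a + P([b,∞))·δ_b` the
winsorisation of `P` (infinite endpoints contribute no atom since the corresponding
coefficient vanishes).  Then `σ²(Q) < σ²(P)`, or `Q = P`, or `σ²(P) = 0`. -/
theorem stmt10 (P : Measure ℝ) [IsProbabilityMeasure P]
    (h2 : Integrable (fun x => x ^ 2) P)
    (a b : EReal) (hab : a ≤ b)
    (Q : Measure ℝ)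
    (hQ : Q = P.restrict {x : ℝ | a < (x : EReal) ∧ (x : EReal) < b}
        + P {x : ℝ | (x : EReal) ≤ a} • Measure.dirac a.toReal
        + P {x : ℝ | b ≤ (x : EReal)} • Measure.dirac b.toReal) :
    varM Q < varM P ∨ Q = P ∨ varM P = 0 := by
  rcases hab.lt_or_eq with hlt | heq
  · -- a < b : winsorisation is a pushforward
    set f := wins a b with hfdef
    have hf : Measurable f := wins_measurable
    have hc : Measurable ((↑) : ℝ → EReal) := continuous_coe_real_ereal.measurable
    have hsLow : MeasurableSet {x : ℝ | (x : EReal) ≤ a} := hc measurableSet_Iic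
    have hsHigh : MeasurableSet {x : ℝ | b ≤ (x : EReal)} := hc measurableSet_Ici
    have hsMid : MeasurableSet {x : ℝ | a < (x : EReal) ∧ (x : EReal) < b} := by
      have : {x : ℝ | a < (x : EReal) ∧ (x : EReal) < b}
          = (fun x : ℝ => (x : EReal)) ⁻¹' (Set.Ioo a b) := rfl
      rw [this]; exact hc measurableSet_Ioo
    have hQmap : Q = P.map f := by
      rw [hQ]
      refine Measure.ext fun s hs => ?_
      rw [Measure.map_apply hf hs]
      set t := f ⁻¹' s with ht
      have htm : MeasurableSet t := hf hs
      -- split t into three parts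
      have hsplit1 := measure_inter_add_diff (μ := P) t hsMid
      have hsplit2 := measure_inter_add_diff (μ := P) (t \ {x : ℝ | a < (x : EReal) ∧ (x : EReal) < b}) hsLow
      have he1 : (t \ {x : ℝ | a < (x : EReal) ∧ (x : EReal) < b}) ∩ {x : ℝ | (x : EReal) ≤ a}
          = t ∩ {x : ℝ | (x : EReal) ≤ a} := by
        ext z
        simp only [Set.mem_inter_iff, Set.mem_diff, Set.mem_setOf_eq]
        constructor
        · rintro ⟨⟨hz1, _⟩, hz3⟩; exact ⟨hz1, hz3⟩
        · rintro ⟨hz1, hz3⟩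
          exact ⟨⟨hz1, fun hmid => absurd hz3 (not_le.mpr hmid.1)⟩, hz3⟩
      have he2 : (t \ {x : ℝ | a < (x : EReal) ∧ (x : EReal) < b}) \ {x : ℝ | (x : EReal) ≤ a}
          = t ∩ {x : ℝ | b ≤ (x : EReal)} := by
        ext z
        simp only [Set.mem_diff, Set.mem_inter_iff, Set.mem_setOf_eq]
        constructor
        · rintro ⟨⟨hz1, hz2⟩, hz3⟩
          refine ⟨hz1, ?_⟩
          have hza : a < (z : EReal) := not_le.mp hz3
          by_contra hzb
          exact hz2 ⟨hza, not_le.mp hzb⟩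
        · rintro ⟨hz1, hz2⟩
          have hza : a < (z : EReal) := lt_of_lt_of_le hlt hz2
          exact ⟨⟨hz1, fun hmid => absurd hz2 (not_le.mpr hmid.2)⟩, not_le.mpr hza⟩
      rw [he1, he2] at hsplit2
      -- compute the three pieces
      have hmid : t ∩ {x : ℝ | a < (x : EReal) ∧ (x : EReal) < b}
          = s ∩ {x : ℝ | a < (x : EReal) ∧ (x : EReal) < b} := by
        ext z
        simp only [Set.mem_inter_iff, ht, Set.mem_preimage, Set.mem_setOf_eq]
        constructor
        · rintro ⟨hz1, hz2⟩
          rw [hfdef, wins_mid hz2.1 hz2.2] at hz1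
          exact ⟨hz1, hz2⟩
        · rintro ⟨hz1, hz2⟩
          rw [hfdef, wins_mid hz2.1 hz2.2]
          exact ⟨hz1, hz2⟩
      have hlow : P (t ∩ {x : ℝ | (x : EReal) ≤ a})
          = P {x : ℝ | (x : EReal) ≤ a} * Measure.dirac a.toReal s := by
        rw [Measure.dirac_apply' _ hs]
        by_cases hmem : a.toReal ∈ s
        · have : t ∩ {x : ℝ | (x : EReal) ≤ a} = {x : ℝ | (x : EReal) ≤ a} := by
            ext z
            simp only [Set.mem_inter_iff, ht, Set.mem_preimage, Set.mem_setOf_eq]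
            constructor
            · rintro ⟨_, hz2⟩; exact hz2
            · intro hz
              rw [hfdef, wins_low hz]
              exact ⟨hmem, hz⟩
          rw [this, Set.indicator_of_mem hmem]
          simp
        · have : t ∩ {x : ℝ | (x : EReal) ≤ a} = ∅ := by
            ext z
            simp only [Set.mem_inter_iff, ht, Set.mem_preimage, Set.mem_setOf_eq,
              Set.mem_empty_iff_false, iff_false, not_and]
            intro hz1 hz2
            rw [hfdef, wins_low hz2] at hz1
            exact hmem hz1
          rw [this, Set.indicator_of_notMem hmem]
          simp
      have hhigh : P (t ∩ {x : ℝ | b ≤ (x : EReal)})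
          = P {x : ℝ | b ≤ (x : EReal)} * Measure.dirac b.toReal s := by
        rw [Measure.dirac_apply' _ hs]
        by_cases hmem : b.toReal ∈ s
        · have : t ∩ {x : ℝ | b ≤ (x : EReal)} = {x : ℝ | b ≤ (x : EReal)} := by
            ext z
            simp only [Set.mem_inter_iff, ht, Set.mem_preimage, Set.mem_setOf_eq]
            constructor
            · rintro ⟨_, hz2⟩; exact hz2
            · intro hz
              rw [hfdef, wins_high hlt hz]
              exact ⟨hmem, hz⟩
          rw [this, Set.indicator_of_mem hmem]
          simp
        · have : t ∩ {x : ℝ | b ≤ (x : EReal)} = ∅ := by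
            ext z
            simp only [Set.mem_inter_iff, ht, Set.mem_preimage, Set.mem_setOf_eq,
              Set.mem_empty_iff_false, iff_false, not_and]
            intro hz1 hz2
            rw [hfdef, wins_high hlt hz2] at hz1
            exact hmem hz1
          rw [this, Set.indicator_of_notMem hmem]
          simp
      have hrestr : P.restrict {x : ℝ | a < (x : EReal) ∧ (x : EReal) < b} s
          = P (s ∩ {x : ℝ | a < (x : EReal) ∧ (x : EReal) < b}) :=
        Measure.restrict_apply hs
      simp only [Measure.add_apply, Measure.smul_apply, smul_eq_mul]
      rw [hrestr, ← hmid, ← hlow, ← hhigh]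
      calc P (t ∩ {x : ℝ | a < (x : EReal) ∧ (x : EReal) < b})
            + P (t ∩ {x : ℝ | (x : EReal) ≤ a}) + P (t ∩ {x : ℝ | b ≤ (x : EReal)})
          = P (t ∩ {x : ℝ | a < (x : EReal) ∧ (x : EReal) < b})
            + (P (t ∩ {x : ℝ | (x : EReal) ≤ a}) + P (t ∩ {x : ℝ | b ≤ (x : EReal)})) := by
            rw [add_assoc]
        _ = P (t ∩ {x : ℝ | a < (x : EReal) ∧ (x : EReal) < b})
            + P (t \ {x : ℝ | a < (x : EReal) ∧ (x : EReal) < b}) := by rw [hsplit2]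
        _ = P t := hsplit1
    rw [hQmap]
    exact core_lemma h2 f hf (wins_lip hlt) (wins_strict hlt)
  · -- a = b : Q is a multiple of a Dirac measure
    subst heq
    have hmide : {x : ℝ | a < (x : EReal) ∧ (x : EReal) < a} = ∅ := by
      ext z
      simp only [Set.mem_setOf_eq, Set.mem_empty_iff_false, iff_false, not_and]
      intro h1 h2
      exact absurd (h1.trans h2) (lt_irrefl a)
    have hQ' : Q = (P {x : ℝ | (x : EReal) ≤ a} + P {x : ℝ | a ≤ (x : EReal)})
        • Measure.dirac a.toReal := by
      rw [hQ, hmide, Measure.restrict_empty, zero_add, ← add_smul]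
    set r := (P {x : ℝ | (x : EReal) ≤ a} + P {x : ℝ | a ≤ (x : EReal)}).toReal with hr
    have hfin : P {x : ℝ | (x : EReal) ≤ a} + P {x : ℝ | a ≤ (x : EReal)} ≠ ⊤ :=
      ENNReal.add_ne_top.mpr ⟨measure_ne_top _ _, measure_ne_top _ _⟩
    have hr1 : 1 ≤ r := by
      have hcov : (Set.univ : Set ℝ) ⊆ {x : ℝ | (x : EReal) ≤ a} ∪ {x : ℝ | a ≤ (x : EReal)} := by
        intro z _
        rcases le_total ((z : ℝ) : EReal) a with h | h
        · exact Or.inl h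
        · exact Or.inr h
      have h1 : (1 : ℝ≥0∞) ≤ P {x : ℝ | (x : EReal) ≤ a} + P {x : ℝ | a ≤ (x : EReal)} := by
        calc (1 : ℝ≥0∞) = P Set.univ := (measure_univ).symm
          _ ≤ P ({x : ℝ | (x : EReal) ≤ a} ∪ {x : ℝ | a ≤ (x : EReal)}) := measure_mono hcov
          _ ≤ _ := measure_union_le _ _
      have := (ENNReal.toReal_le_toReal (by norm_num) hfin).mpr h1
      simpa using this
    have hvQ : varM Q ≤ 0 := by
      have hint1 : ∫ x, x ^ 2 ∂Q = r * a.toReal ^ 2 := by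
        rw [hQ', integral_smul_measure, integral_dirac]
        simp [hr, smul_eq_mul]
      have hint2 : ∫ x, x ∂Q = r * a.toReal := by
        rw [hQ', integral_smul_measure, integral_dirac]
        simp [hr, smul_eq_mul]
      rw [varM, hint1, hint2]
      nlinarith [sq_nonneg a.toReal, hr1]
    by_cases hvP : varM P = 0
    · exact Or.inr (Or.inr hvP)
    · left
      have := varM_nonneg h2
      have : 0 < varM P := lt_of_le_of_ne this (Ne.symm hvP)
      linarith
end

section
/- Let σ, τ > 0, ω = max(σ,τ)/min(σ,τ), and x = √(2 log ω/(ω²−1)) if ω > 1 and x = 1 if ω = 1. Then the Kolmogorov distance between the centred normal laws N(0,σ²) and N(0,τ²) equals Φ(ωx) − Φ(x), and this is at most (1/√(2πe)) · |σ−τ|/min(σ,τ). -/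
open MeasureTheory Set
open scoped ENNReal NNReal

/-- The standard normal distribution function `Φ`. -/
noncomputable def stdPhi (x : ℝ) : ℝ :=
  (ProbabilityTheory.gaussianReal 0 1 (Set.Iic x)).toReal

section helpers

open ProbabilityTheory Real

noncomputable def phir (t : ℝ) : ℝ := (Real.sqrt (2 * Real.pi))⁻¹ * Real.exp (-t^2/2)

lemma phir_cont : Continuous phir :=
  continuous_const.mul (Real.continuous_exp.comp (by fun_prop))

lemma phir_eq : phir = gaussianPDFReal 0 1 := by
  ext t; simp [phir, gaussianPDFReal]

lemma phir_nonneg (t : ℝ) : 0 ≤ phir t := by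
  unfold phir; positivity

lemma phir_integrable : Integrable phir := by
  rw [phir_eq]; exact integrable_gaussianPDFReal 0 1

lemma stdPhi_eq (y : ℝ) : stdPhi y = ∫ t in Iic y, phir t := by
  rw [stdPhi, gaussianReal_apply_eq_integral 0 one_ne_zero, ENNReal.toReal_ofReal, phir_eq]
  exact integral_nonneg fun t => gaussianPDFReal_nonneg 0 1 t

lemma stdPhi_sub (c y : ℝ) : stdPhi y - stdPhi c = ∫ t in c..y, phir t := by
  rw [stdPhi_eq, stdPhi_eq]
  exact intervalIntegral.integral_Iic_sub_Iic phir_integrable.integrableOn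
    phir_integrable.integrableOn

lemma stdPhi_mono : Monotone stdPhi := by
  intro u v huv
  exact ENNReal.toReal_mono (measure_ne_top _ _)
    (measure_mono (μ := gaussianReal 0 1) (Iic_subset_Iic.mpr huv))

lemma stdPhi_neg (y : ℝ) : stdPhi (-y) = 1 - stdPhi y := by
  have hmap : (gaussianReal 0 1).map ((-1 : ℝ) * ·) = gaussianReal 0 1 := by
    rw [gaussianReal_map_const_mul]; norm_num
  have hpre : ((-1 : ℝ) * ·)⁻¹' (Iic (-y)) = Ici y := by
    ext t; simp [neg_le]
  have h1 : gaussianReal 0 1 (Iic (-y)) = gaussianReal 0 1 (Ici y) := by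
    conv_lhs => rw [← hmap]
    rw [Measure.map_apply (measurable_const_mul _) measurableSet_Iic, hpre]
  have hsing : gaussianReal 0 1 {y} = 0 :=
    gaussianReal_absolutelyContinuous 0 one_ne_zero (volume_singleton)
  have h2 : gaussianReal 0 1 (Ici y) = gaussianReal 0 1 (Ioi y) := by
    rw [← Ioi_union_left]
    refine le_antisymm ?_ (measure_mono subset_union_left)
    calc gaussianReal 0 1 (Ioi y ∪ {y}) ≤ gaussianReal 0 1 (Ioi y) + gaussianReal 0 1 {y} :=
          measure_union_le _ _
    _ = gaussianReal 0 1 (Ioi y) := by rw [hsing, add_zero]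
  have h3 : gaussianReal 0 1 (Iic y) + gaussianReal 0 1 (Ioi y) = 1 := by
    rw [← measure_union (Iic_disjoint_Ioi le_rfl) measurableSet_Ioi, Iic_union_Ioi, measure_univ]
  rw [stdPhi, stdPhi, h1, h2]
  have ha := measure_ne_top (gaussianReal 0 1) (Iic y)
  have hb := measure_ne_top (gaussianReal 0 1) (Ioi y)
  have := congrArg ENNReal.toReal h3
  rw [ENNReal.toReal_add ha hb] at this
  simp at this
  linarith

lemma gauss_scale {s : ℝ} (hs : 0 < s) (z : ℝ) :
    (gaussianReal 0 (s^2).toNNReal (Set.Iic z)).toReal = stdPhi (z / s) := by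
  have h2 : gaussianReal 0 ((s^2).toNNReal) = (gaussianReal 0 1).map (s * ·) := by
    rw [gaussianReal_map_const_mul, mul_zero]
    congr 1
    ext
    simp [Real.coe_toNNReal _ (sq_nonneg s)]
  have hpre : (s * ·)⁻¹' (Iic z) = Iic (z / s) := by
    ext t
    simp only [mem_preimage, mem_Iic, le_div_iff₀ hs, mul_comm]
  rw [h2, Measure.map_apply (measurable_const_mul _) measurableSet_Iic, hpre, stdPhi]

lemma stdPhi_hasDeriv (ω y : ℝ) :
    HasDerivAt (fun u => stdPhi (ω * u) - stdPhi u) (ω * phir (ω * y) - phir y) y := by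
  have hG : ∀ v : ℝ, HasDerivAt (fun w => ∫ t in (0:ℝ)..w, phir t) (phir v) v :=
    fun v => (phir_cont.integral_hasStrictDerivAt 0 v).hasDerivAt
  have h1 : HasDerivAt (fun u => ∫ t in (0:ℝ)..(ω * u), phir t) (phir (ω * y) * ω) y := by
    exact ((hG (ω * y)).comp y ((hasDerivAt_id y).const_mul ω)).congr_deriv (by simp)
  have h2 := h1.sub (hG y)
  have heq : (fun u => stdPhi (ω * u) - stdPhi u)
      = fun u => ((∫ t in (0:ℝ)..(ω*u), phir t) - ∫ t in (0:ℝ)..u, phir t)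
          + stdPhi 0 - stdPhi 0 := by
    funext u
    have a1 := stdPhi_sub 0 (ω*u)
    have a2 := stdPhi_sub 0 u
    linarith
  rw [heq]
  have := (h2.add_const (stdPhi 0)).sub_const (stdPhi 0)
  exact this.congr_deriv (by ring)

end helpers

set_option maxHeartbeats 1000000 in
/-- For `σ, τ > 0`, `ω = max(σ,τ)/min(σ,τ)`, and `x = √(2 log ω/(ω²−1))` if `ω > 1`,
`x = 1` if `ω = 1`, the Kolmogorov distance between `N(0,σ²)` and `N(0,τ²)` equals
`Φ(ωx) − Φ(x)`, which is at most `(1/√(2πe)) · |σ−τ|/min(σ,τ)`. -/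
theorem stmt11 (σ τ : ℝ) (hσ : 0 < σ) (hτ : 0 < τ)
    (ω : ℝ) (hω : ω = max σ τ / min σ τ)
    (x : ℝ) (hx : x = if ω = 1 then 1 else Real.sqrt (2 * Real.log ω / (ω ^ 2 - 1))) :
    (⨆ z : ℝ, |(ProbabilityTheory.gaussianReal 0 (σ ^ 2).toNNReal (Set.Iic z)).toReal
        - (ProbabilityTheory.gaussianReal 0 (τ ^ 2).toNNReal (Set.Iic z)).toReal|)
      = stdPhi (ω * x) - stdPhi x ∧
    stdPhi (ω * x) - stdPhi x
      ≤ (Real.sqrt (2 * Real.pi * Real.exp 1))⁻¹ * (|σ - τ| / min σ τ) := by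
  set a := min σ τ with hadef
  set b := max σ τ with hbdef
  have ha : 0 < a := lt_min hσ hτ
  have hab : a ≤ b := min_le_max
  have hb : 0 < b := ha.trans_le hab
  have hω1 : 1 ≤ ω := by rw [hω]; exact (one_le_div ha).mpr hab
  have hba : b = ω * a := by rw [hω]; field_simp
  set F : ℝ → ℝ := fun u => stdPhi (ω * u) - stdPhi u with hF
  -- rewrite the inner expression
  have hre : ∀ z : ℝ,
      |(ProbabilityTheory.gaussianReal 0 (σ ^ 2).toNNReal (Set.Iic z)).toReal
        - (ProbabilityTheory.gaussianReal 0 (τ ^ 2).toNNReal (Set.Iic z)).toReal|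
      = |F (z / b)| := by
    intro z
    rw [gauss_scale hσ, gauss_scale hτ]
    have hzab : z / a = ω * (z / b) := by
      rw [hba]; field_simp
    rcases le_total σ τ with h | h
    · have h1 : a = σ := min_eq_left h
      have h2 : b = τ := max_eq_right h
      rw [hF]
      simp only [← h1, ← h2, ← hzab]
    · have h1 : a = τ := min_eq_right h
      have h2 : b = σ := max_eq_left h
      rw [hF, abs_sub_comm]
      simp only [← h1, ← h2, ← hzab]
  have hsup : (⨆ z : ℝ, |(ProbabilityTheory.gaussianReal 0 (σ ^ 2).toNNReal (Set.Iic z)).toReal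
        - (ProbabilityTheory.gaussianReal 0 (τ ^ 2).toNNReal (Set.Iic z)).toReal|)
      = ⨆ u : ℝ, |F u| := by
    simp_rw [hre]
    rw [iSup, iSup]
    congr 1
    ext r
    constructor
    · rintro ⟨z, rfl⟩; exact ⟨z / b, rfl⟩
    · rintro ⟨u, rfl⟩
      exact ⟨u * b, by show |F (u * b / b)| = |F u|; rw [mul_div_cancel_right₀ _ hb.ne']⟩
  rw [hsup]
  by_cases hω1' : ω = 1
  · subst hω1'
    have hx1 : x = 1 := by rw [hx]; simp
    have hστ : σ = τ := by
      have hab2 : (σ ⊓ τ : ℝ) = σ ⊔ τ := by rw [one_mul] at hba; exact hba.symm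
      exact le_antisymm (le_sup_left.trans ((le_of_eq hab2.symm).trans inf_le_right))
        (le_sup_right.trans ((le_of_eq hab2.symm).trans inf_le_left))
    have hF0 : ∀ u, F u = 0 := fun u => by simp [hF]
    constructor
    · simp only [hF0, abs_zero, ciSup_const]
      simp [hx1]
    · simp [hx1, hστ]
  · have hωgt : 1 < ω := lt_of_le_of_ne hω1 (Ne.symm hω1')
    have hωpos : 0 < ω := lt_trans one_pos hωgt
    have hlogpos : 0 < Real.log ω := Real.log_pos hωgt
    have hw2 : 0 < ω ^ 2 - 1 := by nlinarith
    have hxval : x = Real.sqrt (2 * Real.log ω / (ω ^ 2 - 1)) := by rw [hx, if_neg hω1']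
    have hargpos : 0 < 2 * Real.log ω / (ω ^ 2 - 1) := by positivity
    have hxpos : 0 < x := by rw [hxval]; exact Real.sqrt_pos.mpr hargpos
    have hx2 : x ^ 2 = 2 * Real.log ω / (ω ^ 2 - 1) := by
      rw [hxval, Real.sq_sqrt hargpos.le]
    have hx2' : (ω ^ 2 - 1) * x ^ 2 / 2 = Real.log ω := by
      rw [hx2]; field_simp
    -- pointwise derivative sign facts
    have keyle : ∀ u : ℝ, (ω ^ 2 - 1) * u ^ 2 / 2 ≤ Real.log ω → phir u ≤ ω * phir (ω * u) := by
      intro u h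
      have hexp : Real.exp (-u ^ 2 / 2) ≤ ω * Real.exp (-(ω * u) ^ 2 / 2) := by
        have heq : ω * Real.exp (-(ω * u) ^ 2 / 2)
            = Real.exp (Real.log ω + -(ω * u) ^ 2 / 2) := by
          rw [Real.exp_add, Real.exp_log hωpos]
        rw [heq]
        apply Real.exp_le_exp.mpr
        nlinarith
      unfold phir
      rw [mul_left_comm]
      exact mul_le_mul_of_nonneg_left hexp (inv_nonneg.mpr (Real.sqrt_nonneg _))
    have keyge : ∀ u : ℝ, Real.log ω ≤ (ω ^ 2 - 1) * u ^ 2 / 2 → ω * phir (ω * u) ≤ phir u := by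
      intro u h
      have hexp : ω * Real.exp (-(ω * u) ^ 2 / 2) ≤ Real.exp (-u ^ 2 / 2) := by
        have heq : ω * Real.exp (-(ω * u) ^ 2 / 2)
            = Real.exp (Real.log ω + -(ω * u) ^ 2 / 2) := by
          rw [Real.exp_add, Real.exp_log hωpos]
        rw [heq]
        apply Real.exp_le_exp.mpr
        nlinarith
      unfold phir
      rw [mul_left_comm]
      exact mul_le_mul_of_nonneg_left hexp (inv_nonneg.mpr (Real.sqrt_nonneg _))
    have hFdiff : ∀ u : ℝ, HasDerivAt F (ω * phir (ω * u) - phir u) u := stdPhi_hasDeriv ω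
    have hFcont : Continuous F := by
      rw [continuous_iff_continuousAt]
      exact fun u => (hFdiff u).continuousAt
    have hmono : MonotoneOn F (Icc 0 x) := by
      apply monotoneOn_of_deriv_nonneg (convex_Icc 0 x) hFcont.continuousOn
      · intro u _
        exact (hFdiff u).differentiableAt.differentiableWithinAt
      · intro u hu
        rw [interior_Icc] at hu
        rw [(hFdiff u).deriv, sub_nonneg]
        apply keyle
        rw [← hx2']
        have : u ^ 2 ≤ x ^ 2 := by nlinarith [hu.1.le, hu.2.le]
        nlinarith
    have hanti : AntitoneOn F (Ici x) := by
      apply antitoneOn_of_deriv_nonpos (convex_Ici x) hFcont.continuousOn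
      · intro u _
        exact (hFdiff u).differentiableAt.differentiableWithinAt
      · intro u hu
        rw [interior_Ici] at hu
        rw [(hFdiff u).deriv, sub_nonpos]
        apply keyge
        rw [← hx2']
        have : x ^ 2 ≤ u ^ 2 := by nlinarith [(show x < u from hu).le, hxpos.le]
        nlinarith
    have hFmax : ∀ u : ℝ, 0 ≤ u → F u ≤ F x := by
      intro u hu
      rcases le_total u x with h | h
      · exact hmono ⟨hu, h⟩ ⟨hxpos.le, le_refl x⟩ h
      · exact hanti Set.self_mem_Ici (Set.mem_Ici.mpr h) h
    have hFnonneg : ∀ u : ℝ, 0 ≤ u → 0 ≤ F u := by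
      intro u hu
      apply sub_nonneg.mpr
      apply stdPhi_mono
      nlinarith
    have hFneg : ∀ u : ℝ, F (-u) = -F u := by
      intro u
      simp only [hF]
      rw [mul_neg, stdPhi_neg, stdPhi_neg]
      ring
    have habs : ∀ u : ℝ, |F u| ≤ F x := by
      intro u
      rcases le_or_gt 0 u with h | h
      · rw [abs_of_nonneg (hFnonneg u h)]; exact hFmax u h
      · have : F u = -F (-u) := by rw [← hFneg, neg_neg]
        rw [this, abs_neg, abs_of_nonneg (hFnonneg (-u) (by linarith))]
        exact hFmax (-u) (by linarith)
    have hbdd : BddAbove (Set.range fun u => |F u|) := by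
      refine ⟨F x, ?_⟩
      rintro r ⟨u, rfl⟩
      exact habs u
    constructor
    · apply le_antisymm
      · exact ciSup_le habs
      · have h1 := le_ciSup hbdd x
        rwa [abs_of_nonneg (hFnonneg x hxpos.le)] at h1
    · -- the bound
      have hFx : F x = ∫ t in x..(ω * x), phir t := (stdPhi_sub x (ω * x))
      have hxle : x ≤ ω * x := by nlinarith
      have hint : ∫ t in x..(ω * x), phir t ≤ (ω * x - x) * phir x := by
        have h1 : ∫ t in x..(ω * x), phir t ≤ ∫ _ in x..(ω * x), phir x := by
          apply intervalIntegral.integral_mono_on hxle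
            (phir_integrable.intervalIntegrable) intervalIntegrable_const
          intro t ht
          unfold phir
          apply mul_le_mul_of_nonneg_left _ (inv_nonneg.mpr (Real.sqrt_nonneg _))
          apply Real.exp_le_exp.mpr
          nlinarith [ht.1, hxpos.le]
        rwa [intervalIntegral.integral_const, smul_eq_mul] at h1
      have hxe : x * Real.exp (-x ^ 2 / 2) ≤ Real.exp (-(1:ℝ) / 2) := by
        have h1 : x ≤ Real.exp ((x ^ 2 - 1) / 2) := by
          have := Real.add_one_le_exp ((x ^ 2 - 1) / 2)
          nlinarith [sq_nonneg (x - 1)]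
        calc x * Real.exp (-x ^ 2 / 2)
            ≤ Real.exp ((x ^ 2 - 1) / 2) * Real.exp (-x ^ 2 / 2) :=
              mul_le_mul_of_nonneg_right h1 (Real.exp_pos _).le
          _ = Real.exp (-(1:ℝ) / 2) := by rw [← Real.exp_add]; ring_nf
      have hsqrt : (Real.sqrt (2 * Real.pi * Real.exp 1))⁻¹
          = (Real.sqrt (2 * Real.pi))⁻¹ * Real.exp (-(1:ℝ) / 2) := by
        rw [Real.sqrt_mul (by positivity), mul_inv]
        congr 1
        rw [show Real.exp 1 = (Real.exp ((1:ℝ)/2)) ^ 2 by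
          rw [← Real.exp_nat_mul]; norm_num]
        rw [Real.sqrt_sq (Real.exp_pos _).le, ← Real.exp_neg]
        norm_num
      have hrhs : |σ - τ| / a = ω - 1 := by
        have h1 : |σ - τ| = b - a := by
          rw [hbdef, hadef, ← max_sub_min_eq_abs, sup_comm σ τ, inf_comm σ τ]
        rw [h1, hba]
        field_simp
      calc stdPhi (ω * x) - stdPhi x = F x := rfl
        _ ≤ (ω * x - x) * phir x := by rw [hFx]; exact hint
        _ = (ω - 1) * ((Real.sqrt (2 * Real.pi))⁻¹ * (x * Real.exp (-x ^ 2 / 2))) := by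
            unfold phir; ring
        _ ≤ (ω - 1) * ((Real.sqrt (2 * Real.pi))⁻¹ * Real.exp (-(1:ℝ) / 2)) := by
            apply mul_le_mul_of_nonneg_left _ (by linarith)
            exact mul_le_mul_of_nonneg_left hxe (inv_nonneg.mpr (Real.sqrt_nonneg _))
        _ = (Real.sqrt (2 * Real.pi * Real.exp 1))⁻¹ * (|σ - τ| / a) := by
            rw [hsqrt, hrhs]; ring
end

section
/- The supremum over p ∈ (0,1) of (3 + |1−2p|)/(6√(2π)·(1/2 + 2(p−1/2)²)) equals (3+√10)/(6√(2π)), attained exactly at p = (4−√10)/2 and p = 1 − (4−√10)/2. -/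
open Set

/-- The supremum over `p ∈ (0,1)` of
`(3 + |1−2p|)/(6√(2π)·(1/2 + 2(p−1/2)²))` equals `(3+√10)/(6√(2π))`, attained exactly
at `p = (4−√10)/2` and `p = 1 − (4−√10)/2`. -/
theorem stmt13 :
    sSup ((fun p : ℝ =>
        (3 + |1 - 2 * p|) / (6 * Real.sqrt (2 * Real.pi) * (1 / 2 + 2 * (p - 1 / 2) ^ 2))) ''
        Set.Ioo (0 : ℝ) 1)
      = (3 + Real.sqrt 10) / (6 * Real.sqrt (2 * Real.pi)) ∧
    ∀ p ∈ Set.Ioo (0 : ℝ) 1,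
      ((3 + |1 - 2 * p|) / (6 * Real.sqrt (2 * Real.pi) * (1 / 2 + 2 * (p - 1 / 2) ^ 2))
          = (3 + Real.sqrt 10) / (6 * Real.sqrt (2 * Real.pi))
        ↔ p = (4 - Real.sqrt 10) / 2 ∨ p = 1 - (4 - Real.sqrt 10) / 2) := by
  have hS : (0:ℝ) < Real.sqrt (2 * Real.pi) :=
    Real.sqrt_pos.2 (by positivity)
  have hs2 : Real.sqrt 10 ^ 2 = 10 := Real.sq_sqrt (by norm_num)
  have h3 : (3:ℝ) < Real.sqrt 10 := by
    rw [show (3:ℝ) = Real.sqrt 9 by rw [show (9:ℝ) = 3^2 by norm_num, Real.sqrt_sq (by norm_num)]]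
    exact Real.sqrt_lt_sqrt (by norm_num) (by norm_num)
  have h4 : Real.sqrt 10 < 4 := by
    rw [show (4:ℝ) = Real.sqrt 16 by rw [show (16:ℝ) = 4^2 by norm_num, Real.sqrt_sq (by norm_num)]]
    exact Real.sqrt_lt_sqrt (by norm_num) (by norm_num)
  set s := Real.sqrt 10 with hsdef
  set S := Real.sqrt (2 * Real.pi) with hSdef
  -- inequality: the function is bounded above by (3+s)/(6S)
  have hle : ∀ p : ℝ,
      (3 + |1 - 2 * p|) / (6 * S * (1 / 2 + 2 * (p - 1 / 2) ^ 2)) ≤ (3 + s) / (6 * S) := by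
    intro p
    have ht2 : |1 - 2 * p| ^ 2 = (1 - 2 * p) ^ 2 := sq_abs _
    have ht0 : (0:ℝ) ≤ |1 - 2 * p| := abs_nonneg _
    set t := |1 - 2 * p| with htdef
    have hDpos : (0:ℝ) < 1 / 2 + 2 * (p - 1 / 2) ^ 2 := by positivity
    have hD : (1:ℝ) / 2 + 2 * (p - 1 / 2) ^ 2 = (1 + t ^ 2) / 2 := by rw [ht2]; ring
    rw [div_le_div_iff₀ (by positivity) (by positivity), hD]
    have h1 : 2 * (3 + t) ≤ (3 + s) * (1 + t ^ 2) := by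
      nlinarith [sq_nonneg (t - (s - 3)), hs2, h3]
    have h2 := mul_le_mul_of_nonneg_left h1 (by positivity : (0:ℝ) ≤ 3 * S)
    nlinarith [h2]
  -- equality characterization (for all real p)
  have hchar : ∀ p : ℝ,
      ((3 + |1 - 2 * p|) / (6 * S * (1 / 2 + 2 * (p - 1 / 2) ^ 2)) = (3 + s) / (6 * S)
        ↔ p = (4 - s) / 2 ∨ p = 1 - (4 - s) / 2) := by
    intro p
    have ht2 : |1 - 2 * p| ^ 2 = (1 - 2 * p) ^ 2 := sq_abs _
    have ht0 : (0:ℝ) ≤ |1 - 2 * p| := abs_nonneg _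
    set t := |1 - 2 * p| with htdef
    have hDpos : (0:ℝ) < 1 / 2 + 2 * (p - 1 / 2) ^ 2 := by positivity
    have hD : (1:ℝ) / 2 + 2 * (p - 1 / 2) ^ 2 = (1 + t ^ 2) / 2 := by rw [ht2]; ring
    constructor
    · intro h
      rw [div_eq_div_iff (by positivity) (by positivity), hD] at h
      -- from h : (3+t)*(6*S) = (3+s)*(6*S*((1+t^2)/2))
      have h2 : 3 * S * (2 * (3 + t) - (3 + s) * (1 + t ^ 2)) = 0 := by linear_combination h
      have h3' : 2 * (3 + t) - (3 + s) * (1 + t ^ 2) = 0 := by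
        rcases mul_eq_zero.1 h2 with h' | h'
        · exact absurd h' (by positivity)
        · exact h'
      have hid : (3 + s) * (1 + t ^ 2) - 2 * (3 + t) = (3 + s) * (t - (s - 3)) ^ 2 := by
        linear_combination (2 * t + 3 - s) * hs2
      have hk : (3 + s) * (t - (s - 3)) ^ 2 = 0 := by linarith
      have hts : t = s - 3 := by
        rcases mul_eq_zero.1 hk with h' | h'
        · linarith
        · have := sq_eq_zero_iff.1 h'
          linarith
      rcases (abs_eq (by linarith : (0:ℝ) ≤ s - 3)).1 hts with h' | h'
      · left; linarith
      · right; linarith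
    · intro h
      have hts : t = s - 3 := by
        rcases h with h | h
        · have h1 : 1 - 2 * p = s - 3 := by rw [h]; ring
          rw [htdef, h1, abs_of_nonneg (by linarith)]
        · have h1 : 1 - 2 * p = -(s - 3) := by rw [h]; ring
          rw [htdef, h1, abs_neg, abs_of_nonneg (by linarith)]
      rw [div_eq_div_iff (by positivity) (by positivity), hD, hts]
      linear_combination (-3 * S * (s - 3)) * hs2
  refine ⟨?_, fun p _ => hchar p⟩
  apply IsGreatest.csSup_eq
  constructor
  · refine ⟨(4 - s) / 2, ⟨by linarith, by linarith⟩, ?_⟩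
    exact (hchar ((4 - s) / 2)).2 (Or.inl rfl)
  · rintro x ⟨p, -, rfl⟩
    exact hle p
end

section
/- Let M ≥ 0 be a bounded positive measure on ℝ with finite first moment and let a, b ∈ ℝ with ab ≥ 0. Then ζ₁((x ↦ bx)∗M − (x ↦ ax)∗M) = |b−a| · ∫|x| dM(x), where (x↦cx)∗M denotes the pushforward of M under multiplication by c. -/
open MeasureTheory Set Filter

/-- `ζ₁` distance between two (finite) measures: the supremum of `|∫g dμ − ∫g dν|`
over bounded 1-Lipschitz functions `g : ℝ → ℝ`. -/
noncomputable def zeta1 (μ ν : MeasureTheory.Measure ℝ) : ℝ :=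
  sSup {v : ℝ | ∃ g : ℝ → ℝ, (∃ C, ∀ x, |g x| ≤ C) ∧ LipschitzWith 1 g ∧
    v = |(∫ x, g x ∂μ) - ∫ x, g x ∂ν|}

/-- Let `M ≥ 0` be a bounded positive measure on `ℝ` with finite first moment and
`a, b ∈ ℝ` with `ab ≥ 0`.  Then
`ζ₁((x ↦ bx)∗M − (x ↦ ax)∗M) = |b−a| · ∫|x| dM(x)`. -/
theorem stmt16 (M : Measure ℝ) [IsFiniteMeasure M]
    (h1 : Integrable (fun x => |x|) M)
    (a b : ℝ) (hab : 0 ≤ a * b) :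
    zeta1 (M.map (fun x => b * x)) (M.map (fun x => a * x)) = |b - a| * ∫ x, |x| ∂M := by
  set I : ℝ := ∫ x, |x| ∂M with hIdef
  have hI0 : 0 ≤ I := integral_nonneg fun x => abs_nonneg x
  set S : Set ℝ := {v : ℝ | ∃ g : ℝ → ℝ, (∃ C, ∀ x, |g x| ≤ C) ∧ LipschitzWith 1 g ∧
    v = |(∫ x, g x ∂(M.map (fun x => b * x))) - ∫ x, g x ∂(M.map (fun x => a * x))|} with hSdef
  -- integrals over pushforward measures
  have hmap : ∀ (c : ℝ) (g : ℝ → ℝ), Continuous g →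
      ∫ x, g x ∂(M.map (fun x => c * x)) = ∫ x, g (c * x) ∂M := by
    intro c g hg
    exact integral_map (measurable_const_mul c).aemeasurable hg.aestronglyMeasurable
  -- integrability of bounded continuous functions
  have hint : ∀ (g : ℝ → ℝ), Continuous g → (∀ C : ℝ, (∀ x, |g x| ≤ C) →
      ∀ c : ℝ, Integrable (fun x => g (c * x)) M) := by
    intro g hg C hC c
    exact (integrable_const C).mono'
      ((hg.comp (continuous_const.mul continuous_id)).aestronglyMeasurable)
      (ae_of_all _ fun x => by simpa using hC (c * x))
  -- upper bound
  have hub : ∀ v ∈ S, v ≤ |b - a| * I := by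
    rintro v ⟨g, ⟨C, hC⟩, hg, rfl⟩
    rw [hmap b g hg.continuous, hmap a g hg.continuous]
    have hib := hint g hg.continuous C hC b
    have hia := hint g hg.continuous C hC a
    rw [← integral_sub hib hia]
    calc |∫ x, (g (b * x) - g (a * x)) ∂M|
        ≤ ∫ x, |g (b * x) - g (a * x)| ∂M := by
          simpa using norm_integral_le_integral_norm (μ := M) (fun x => g (b * x) - g (a * x))
      _ ≤ ∫ x, |b - a| * |x| ∂M := by
          refine integral_mono (hib.sub hia).abs (h1.const_mul _) fun x => ?_
          have h := hg.dist_le_mul (b * x) (a * x)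
          simp only [Real.dist_eq, NNReal.coe_one, one_mul] at h
          calc |g (b * x) - g (a * x)| ≤ |b * x - a * x| := h
            _ = |b - a| * |x| := by rw [← sub_mul, abs_mul]
      _ = |b - a| * I := integral_const_mul _ _
  have hbdd : BddAbove S := ⟨|b - a| * I, hub⟩
  have hne : S.Nonempty := ⟨0, fun _ => 0, ⟨0, fun x => by simp⟩,
    (LipschitzWith.const 0).weaken zero_le_one, by simp⟩
  -- truncation functions
  set gn : ℕ → ℝ → ℝ := fun n x => min |x| n with hgn
  have hgnlip : ∀ n : ℕ, LipschitzWith 1 (gn n) := fun n =>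
    lipschitzWith_one_norm.min_const (n : ℝ)
  have hgnbd : ∀ n : ℕ, ∀ x : ℝ, |gn n x| ≤ (n : ℝ) := by
    intro n x
    rw [abs_of_nonneg (le_min (abs_nonneg x) (Nat.cast_nonneg n))]
    exact min_le_right _ _
  -- convergence of truncated integrals
  have hconv : ∀ c : ℝ, Tendsto (fun n : ℕ => ∫ x, gn n (c * x) ∂M) atTop
      (nhds (|c| * I)) := by
    intro c
    have hlim : ∫ x, |c * x| ∂M = |c| * I := by
      simp_rw [abs_mul]; exact integral_const_mul _ _
    rw [← hlim]
    refine tendsto_integral_of_dominated_convergence (fun x => |c| * |x|)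
      (fun n => ((hgnlip n).continuous.comp
        (continuous_const.mul continuous_id)).aestronglyMeasurable)
      (h1.const_mul _) (fun n => ae_of_all _ fun x => ?_) (ae_of_all _ fun x => ?_)
    · simp only [hgn]
      rw [Real.norm_eq_abs, abs_of_nonneg (le_min (abs_nonneg _) (Nat.cast_nonneg n))]
      calc min |c * x| (n : ℝ) ≤ |c * x| := min_le_left _ _
        _ = |c| * |x| := abs_mul c x
    · have : ∀ᶠ n : ℕ in atTop, gn n (c * x) = |c * x| := by
        have := (tendsto_natCast_atTop_atTop (R := ℝ)).eventually_ge_atTop (|c * x|)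
        filter_upwards [this] with n hn
        simp only [hgn]; exact min_eq_left hn
      exact tendsto_const_nhds.congr' (by filter_upwards [this] with n hn; exact hn.symm)
  -- the values of truncations are in S
  have hmem : ∀ n : ℕ, |(∫ x, gn n (b * x) ∂M) - ∫ x, gn n (a * x) ∂M| ∈ S := by
    intro n
    refine ⟨gn n, ⟨n, hgnbd n⟩, hgnlip n, ?_⟩
    rw [hmap b _ (hgnlip n).continuous, hmap a _ (hgnlip n).continuous]
  -- |b - a| = ||b| - |a||
  have habs : |b - a| * I = abs (|b| * I - |a| * I) := by
    have h1' : abs (|b| * I - |a| * I) = abs (|b| - |a|) * I := by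
      rw [← sub_mul, abs_mul, abs_of_nonneg hI0]
    rw [h1']
    congr 1
    rcases mul_nonneg_iff.mp hab with ⟨ha, hb⟩ | ⟨ha, hb⟩
    · rw [abs_of_nonneg hb, abs_of_nonneg ha]
    · rw [abs_of_nonpos hb, abs_of_nonpos ha,
        show -b - -a = -(b - a) by ring, abs_neg]
  -- lower bound via limit
  have hlb : |b - a| * I ≤ sSup S := by
    rw [habs]
    have htend : Tendsto (fun n : ℕ =>
        |(∫ x, gn n (b * x) ∂M) - ∫ x, gn n (a * x) ∂M|) atTop
        (nhds (abs (|b| * I - |a| * I))) := ((hconv b).sub (hconv a)).abs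
    exact le_of_tendsto htend (Eventually.of_forall fun n => le_csSup hbdd (hmem n))
  exact le_antisymm (csSup_le hne hub) hlb
end
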